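/- arXiv:1307.4953 — 10 statements merged into one kernel-verified Lean document; each statement's English description precedes it below -/
import Mathlib

section
/- For all t ≥ 0 and all x₁,…,x₅ ≥ 0, the inequality t⁵ ≤ x₁x₂x₃x₄x₅ holds if and only if there exist u₁,…,u₅ ≥ 0 satisfying the six rotated second order cone inequalities u₁² ≤ x₁x₂, u₂² ≤ x₃x₄, u₃² ≤ x₅t, u₄² ≤ u₁u₂, u₅² ≤ u₃t, and t² ≤ u₄u₅. -/
/-!
Multiplying by `t³` turns `t⁵ ≤ x₁x₂x₃x₄x₅` into `t⁸ ≤ x₁x₂x₃x₄x₅t³`, a product of eight factors,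
and `(u₄u₅)⁴ ≤ (u₁u₂)²(u₃t)² ≤ x₁x₂x₃x₄ · x₅t · t²` is a binary tree of geometric means over
those eight factors. Taking every `uᵢ` to be the geometric mean of its two children makes all
inequalities but the root one equalities.
-/

theorem pow_add_le_mul_pow_iff {t P : ℝ} {n : ℕ} (k : ℕ) (ht : 0 ≤ t) (hP : 0 ≤ P)
    (hn : n ≠ 0) : t ^ (n + k) ≤ P * t ^ k ↔ t ^ n ≤ P := by
  rcases ht.eq_or_lt with rfl | ht
  · exact iff_of_true (by rw [zero_pow (by omega)]; positivity) (by rwa [zero_pow hn])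
  · rw [pow_add, mul_le_mul_iff_of_pos_right (pow_pos ht k)]

theorem mul_pow_four_le {u v a b : ℝ} (ha : u ^ 2 ≤ a) (hb : v ^ 2 ≤ b) :
    (u * v) ^ 4 ≤ a ^ 2 * b ^ 2 :=
  calc (u * v) ^ 4 = (u ^ 2) ^ 2 * (v ^ 2) ^ 2 := by ring
    _ ≤ a ^ 2 * b ^ 2 := by gcongr

theorem mul_pow_four_eq {u v a b : ℝ} (ha : u ^ 2 = a) (hb : v ^ 2 = b) :
    (u * v) ^ 4 = a ^ 2 * b ^ 2 := by
  rw [← ha, ← hb]; ring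

theorem sq_sqrt_mul {a b : ℝ} (ha : 0 ≤ a) (hb : 0 ≤ b) : √(a * b) ^ 2 = a * b :=
  Real.sq_sqrt (mul_nonneg ha hb)

/-- SOC representation of the inequality `t⁵ ≤ x₁x₂x₃x₄x₅` over nonnegative reals. -/
theorem stmt_1 (t x₁ x₂ x₃ x₄ x₅ : ℝ) (ht : 0 ≤ t)
    (h₁ : 0 ≤ x₁) (h₂ : 0 ≤ x₂) (h₃ : 0 ≤ x₃) (h₄ : 0 ≤ x₄) (h₅ : 0 ≤ x₅) :
    t ^ 5 ≤ x₁ * x₂ * x₃ * x₄ * x₅ ↔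
      ∃ u₁ u₂ u₃ u₄ u₅ : ℝ,
        0 ≤ u₁ ∧ 0 ≤ u₂ ∧ 0 ≤ u₃ ∧ 0 ≤ u₄ ∧ 0 ≤ u₅ ∧
        u₁ ^ 2 ≤ x₁ * x₂ ∧ u₂ ^ 2 ≤ x₃ * x₄ ∧ u₃ ^ 2 ≤ x₅ * t ∧
        u₄ ^ 2 ≤ u₁ * u₂ ∧ u₅ ^ 2 ≤ u₃ * t ∧ t ^ 2 ≤ u₄ * u₅ := by
  rw [← pow_add_le_mul_pow_iff 3 ht (by positivity) (by norm_num)]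
  constructor
  · intro h
    have e₁ := sq_sqrt_mul h₁ h₂
    have e₂ := sq_sqrt_mul h₃ h₄
    have e₃ := sq_sqrt_mul h₅ ht
    have e₄ := sq_sqrt_mul (Real.sqrt_nonneg (x₁ * x₂)) (Real.sqrt_nonneg (x₃ * x₄))
    have e₅ := sq_sqrt_mul (Real.sqrt_nonneg (x₅ * t)) ht
    refine ⟨_, _, _, _, _, Real.sqrt_nonneg _, Real.sqrt_nonneg _, Real.sqrt_nonneg _,
      Real.sqrt_nonneg _, Real.sqrt_nonneg _, e₁.le, e₂.le, e₃.le, e₄.le, e₅.le, ?_⟩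
    refine le_of_pow_le_pow_left₀ (n := 4) (by norm_num) (by positivity) ?_
    rw [mul_pow_four_eq e₄ e₅, mul_pow, mul_pow, e₁, e₂, e₃]
    calc (t ^ 2) ^ 4 = t ^ (5 + 3) := by ring
      _ ≤ x₁ * x₂ * x₃ * x₄ * x₅ * t ^ 3 := h
      _ = x₁ * x₂ * (x₃ * x₄) * (x₅ * t * t ^ 2) := by ring
  · rintro ⟨u₁, u₂, u₃, u₄, u₅, -, -, -, -, -, q₁, q₂, q₃, q₄, q₅, q₆⟩
    calc t ^ (5 + 3) = (t ^ 2) ^ 4 := by ring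
      _ ≤ (u₄ * u₅) ^ 4 := by gcongr
      _ ≤ (u₁ * u₂) ^ 2 * (u₃ * t) ^ 2 := mul_pow_four_le q₄ q₅
      _ = u₁ ^ 2 * u₂ ^ 2 * (u₃ ^ 2 * t ^ 2) := by ring
      _ ≤ x₁ * x₂ * (x₃ * x₄) * (x₅ * t * t ^ 2) := by gcongr
      _ = x₁ * x₂ * x₃ * x₄ * x₅ * t ^ 3 := by ring
end

section
/- For every positive integer n, the hypograph of the geometric mean, namely the set S = {(x,t) ∈ ℝⁿ × ℝ : xᵢ ≥ 0 for all i, and t ≤ (x₁·x₂·…·xₙ)^{1/n}}, is SOC-representable. -/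
open Matrix

/-- A set `S ⊆ ℝᵈ` is second order cone representable if it is the projection of a set
in a higher dimensional space described by finitely many second order cone inequalities
`‖Gᵢ(z,y) + hᵢ‖ ≤ cᵢᵀ(z,y) + dᵢ`. -/
def SOCRep {d : ℕ} (S : Set (Fin d → ℝ)) : Prop :=
  ∃ (p N : ℕ), 0 < N ∧
    ∃ (r : Fin N → ℕ)
      (G : (i : Fin N) → Matrix (Fin (r i)) (Fin (d + p)) ℝ)
      (h : (i : Fin N) → Fin (r i) → ℝ)
      (c : Fin N → Fin (d + p) → ℝ)
      (δ : Fin N → ℝ),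
      ∀ z : Fin d → ℝ,
        z ∈ S ↔ ∃ y : Fin p → ℝ,
          ∀ i : Fin N,
            Real.sqrt (∑ j, ((G i *ᵥ Fin.append z y) j + h i j) ^ 2) ≤
              (∑ j, c i j * Fin.append z y j) + δ i

/-!
A rotated cone constraint `u² ≤ a b`, `a, b ≥ 0` is the second-order cone constraint
`‖(2u, a - b)‖ ≤ a + b`. Pad `x₁, …, xₙ` with copies of an auxiliary variable `r` to the
`2ⁿ` leaves of a complete binary tree and require every internal node to satisfy
`u² ≤ (left child) (right child)`. By induction on the height, the root `r` then satisfies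
`r ^ 2ⁿ ≤ x₁ ⋯ xₙ · r ^ (2ⁿ - n)`, hence `r ≤ (x₁ ⋯ xₙ) ^ (1/n)`, and `t ≤ r` puts `(x, t)` in
the hypograph. Conversely, setting each internal node to the square root of the product of its
children makes every constraint tight and the root equal to the geometric mean.
-/

open Finset

theorem socRep_of_linearMap_constraints {d : ℕ} {ι κ : Type*} [Fintype ι] [Fintype κ]
    [Nonempty κ] {r : κ → ℕ} (G : (k : κ) → (Fin d ⊕ ι → ℝ) →ₗ[ℝ] Fin (r k) → ℝ)
    (c : κ → (Fin d ⊕ ι → ℝ) →ₗ[ℝ] ℝ) {S : Set (Fin d → ℝ)}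
    (hS : ∀ z, z ∈ S ↔ ∃ y : ι → ℝ, ∀ k,
      √(∑ j, G k (Sum.elim z y) j ^ 2) ≤ c k (Sum.elim z y)) :
    SOCRep S := by
  let eι := Fintype.equivFin ι
  let eκ := Fintype.equivFin κ
  let P := LinearMap.funLeft ℝ ℝ (finSumFinEquiv ∘ Sum.map (id : Fin d → Fin d) eι)
  have hP (z : Fin d → ℝ) (y : Fin (Fintype.card ι) → ℝ) :
      P (Fin.append z y) = Sum.elim z (y ∘ eι) := by
    ext (i | i) <;> simp [P]
  refine ⟨Fintype.card ι, Fintype.card κ, Fintype.card_pos, fun i => r (eκ.symm i),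
    fun i => LinearMap.toMatrix' (G (eκ.symm i) ∘ₗ P), fun _ _ => 0,
    fun i j => (c (eκ.symm i) ∘ₗ P) fun j' => if j = j' then 1 else 0, fun _ => 0,
    fun z => ?_⟩
  have hc (k : κ) (v : Fin (d + Fintype.card ι) → ℝ) :
      ∑ j, c k (P fun j' => if j = j' then 1 else 0) * v j = c k (P v) := by
    rw [← LinearMap.comp_apply, LinearMap.pi_apply_eq_sum_univ (c k ∘ₗ P) v]
    simp only [smul_eq_mul, mul_comm, LinearMap.comp_apply]
  simp only [LinearMap.toMatrix'_mulVec, add_zero, LinearMap.comp_apply, hc, hP, hS z]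
  exact (eι.arrowCongr (Equiv.refl ℝ)).exists_congr_left.trans (exists_congr fun _ =>
    eκ.symm.forall_congr_right.symm)

def InRotatedCone (u a b : ℝ) : Prop := 0 ≤ a ∧ 0 ≤ b ∧ u ^ 2 ≤ a * b

theorem sqrt_le_add_iff_inRotatedCone (u a b : ℝ) :
    √((2 * u) ^ 2 + (a - b) ^ 2) ≤ a + b ↔ InRotatedCone u a b := by
  rw [Real.sqrt_le_iff, InRotatedCone]
  constructor
  · rintro ⟨hab, hsq⟩
    have hu : u ^ 2 ≤ a * b := by nlinarith
    refine ⟨?_, ?_, hu⟩ <;> nlinarith [sq_nonneg u]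
  · rintro ⟨ha, hb, hu⟩
    exact ⟨add_nonneg ha hb, by nlinarith⟩

theorem socRep_of_rotatedCone_constraints {d : ℕ} {ι J K : Type*} [Fintype ι] [Fintype J]
    [Fintype K] [Nonempty J] (ℓ : J → (Fin d ⊕ ι → ℝ) →ₗ[ℝ] ℝ) (u a b : K → (Fin d ⊕ ι → ℝ) →ₗ[ℝ] ℝ)
    {S : Set (Fin d → ℝ)}
    (hS : ∀ z, z ∈ S ↔ ∃ y : ι → ℝ, (∀ j, 0 ≤ ℓ j (Sum.elim z y)) ∧
      ∀ k, InRotatedCone (u k (Sum.elim z y)) (a k (Sum.elim z y)) (b k (Sum.elim z y))) :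
    SOCRep S :=
  socRep_of_linearMap_constraints (r := fun _ => 2)
    (Sum.elim (fun _ => 0) fun k => LinearMap.pi ![2 • u k, a k - b k])
    (Sum.elim ℓ fun k => a k + b k) fun z => by
      simp [hS, Sum.forall, Fin.sum_univ_two, ← sqrt_le_add_iff_inRotatedCone]

theorem prod_range_two_pow_succ {M : Type*} [CommMonoid M] (f : ℕ → M) (h m : ℕ) :
    ∏ i ∈ range (2 ^ (h + 1)), f (m * 2 ^ (h + 1) + i) =
      (∏ i ∈ range (2 ^ h), f (2 * m * 2 ^ h + i)) *
        ∏ i ∈ range (2 ^ h), f ((2 * m + 1) * 2 ^ h + i) := by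
  rw [show 2 ^ (h + 1) = 2 ^ h + 2 ^ h by ring, prod_range_add]
  congr 1 <;> exact prod_congr rfl fun i _ => congrArg f (by ring)

theorem prod_range_eq_prod_mul_pow {M : Type*} [CommMonoid M] {f : ℕ → M} {c : M} {n N : ℕ}
    (hnN : n ≤ N) (hf : ∀ i, n ≤ i → i < N → f i = c) :
    ∏ i ∈ range N, f i = (∏ i ∈ range n, f i) * c ^ (N - n) := by
  obtain ⟨k, rfl⟩ := Nat.exists_eq_add_of_le hnN
  rw [prod_range_add, Nat.add_sub_cancel_left,
    prod_congr rfl fun i hi => hf (n + i) (by omega) (by simp at hi; omega), prod_const,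
    card_range]

theorem heap_induction {k : ℕ} {P : ℕ → ℕ → Prop} (zero : ∀ m, P 0 m)
    (succ : ∀ h m, 1 ≤ m → m < 2 ^ k → P h (2 * m) → P h (2 * m + 1) → P (h + 1) m) :
    P k 1 := by
  suffices ∀ h ≤ k, ∀ m, 1 ≤ m → m < 2 ^ (k + 1 - h) → P h m from
    this k le_rfl 1 le_rfl (by simp)
  intro h
  induction h with
  | zero => exact fun _ m _ _ => zero m
  | succ h ih =>
    intro hk m hm1 hm
    have hchild : 2 * m + 1 < 2 ^ (k + 1 - h) := by
      rw [show k + 1 - h = k + 1 - (h + 1) + 1 by omega, pow_succ]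
      omega
    exact succ h m hm1 (hm.trans_le (Nat.pow_le_pow_right two_pos (by omega)))
      (ih (by omega) _ (by omega) (by omega)) (ih (by omega) _ (by omega) hchild)

section Heap

variable {w : ℕ → ℝ} {k : ℕ}

theorem root_pow_le_prod_leaves_of_inRotatedCone
    (hw : ∀ m, 1 ≤ m → m < 2 ^ k → InRotatedCone (w m) (w (2 * m)) (w (2 * m + 1))) :
    w 1 ^ 2 ^ k ≤ ∏ i ∈ range (2 ^ k), w (2 ^ k + i) := by
  simpa using heap_induction (k := k)
    (P := fun h m => w m ^ 2 ^ h ≤ ∏ i ∈ range (2 ^ h), w (m * 2 ^ h + i)) (by simp)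
    fun h m hm1 hm IH₀ IH₁ => by
      obtain ⟨h₀, h₁, hsq⟩ := hw m hm1 hm
      calc w m ^ 2 ^ (h + 1) = (w m ^ 2) ^ 2 ^ h := by rw [← pow_mul, pow_succ']
        _ ≤ (w (2 * m) * w (2 * m + 1)) ^ 2 ^ h := pow_le_pow_left₀ (sq_nonneg _) hsq _
        _ = w (2 * m) ^ 2 ^ h * w (2 * m + 1) ^ 2 ^ h := mul_pow _ _ _
        _ ≤ _ := mul_le_mul IH₀ IH₁ (pow_nonneg h₁ _) ((pow_nonneg h₀ _).trans IH₀)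
        _ = _ := (prod_range_two_pow_succ w h m).symm

theorem root_pow_eq_prod_leaves_of_sq_eq
    (hw : ∀ m, 1 ≤ m → m < 2 ^ k → w m ^ 2 = w (2 * m) * w (2 * m + 1)) :
    w 1 ^ 2 ^ k = ∏ i ∈ range (2 ^ k), w (2 ^ k + i) := by
  simpa using heap_induction (k := k)
    (P := fun h m => w m ^ 2 ^ h = ∏ i ∈ range (2 ^ h), w (m * 2 ^ h + i)) (by simp)
    fun h m hm1 hm IH₀ IH₁ => by
      rw [prod_range_two_pow_succ, ← IH₀, ← IH₁, ← mul_pow, ← hw m hm1 hm, ← pow_mul,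
        pow_succ']

end Heap

noncomputable def sqrtTree (k : ℕ) (leaf : ℕ → ℝ) (m : ℕ) : ℝ :=
  if 1 ≤ m ∧ m < 2 ^ k then √(sqrtTree k leaf (2 * m) * sqrtTree k leaf (2 * m + 1))
  else leaf m
termination_by 2 ^ k - m

section SqrtTree

variable {k : ℕ} {leaf : ℕ → ℝ}

theorem sqrtTree_of_le {m : ℕ} (hm : 2 ^ k ≤ m) : sqrtTree k leaf m = leaf m := by
  rw [sqrtTree, if_neg (by omega)]

theorem sqrtTree_nonneg (hleaf : ∀ m, 0 ≤ leaf m) (m : ℕ) : 0 ≤ sqrtTree k leaf m := by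
  rw [sqrtTree]
  split_ifs
  exacts [Real.sqrt_nonneg _, hleaf m]

theorem sqrtTree_sq (hleaf : ∀ m, 0 ≤ leaf m) {m : ℕ} (hm1 : 1 ≤ m) (hm : m < 2 ^ k) :
    sqrtTree k leaf m ^ 2 = sqrtTree k leaf (2 * m) * sqrtTree k leaf (2 * m + 1) := by
  rw [sqrtTree, if_pos ⟨hm1, hm⟩,
    Real.sq_sqrt (mul_nonneg (sqrtTree_nonneg hleaf _) (sqrtTree_nonneg hleaf _))]

end SqrtTree

theorem le_rpow_one_div_of_pow_le_mul_pow {R X : ℝ} {n N : ℕ} (hn : n ≠ 0) (hX : 0 ≤ X)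
    (hnN : n ≤ N) (h : R ^ N ≤ X * R ^ (N - n)) : R ≤ X ^ ((1 : ℝ) / n) := by
  rcases le_or_gt R 0 with hR | hR
  · exact hR.trans (Real.rpow_nonneg hX _)
  have hRn : R ^ n ≤ X := by
    rw [← pow_mul_pow_sub R hnN] at h
    exact le_of_mul_le_mul_right h (pow_pos hR _)
  calc R = (R ^ n) ^ ((1 : ℝ) / n) := by rw [one_div, Real.pow_rpow_inv_natCast hR.le hn]
    _ ≤ X ^ ((1 : ℝ) / n) := Real.rpow_le_rpow (pow_nonneg hR.le _) hRn (by positivity)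

namespace GeomMeanHypograph

variable {n : ℕ} (hn : 0 < n)

/-- Heap numbering: node `m` has children `2m` and `2m + 1`. The internal nodes `1 ≤ m < 2ⁿ`
carry the auxiliary variables, leaf `2ⁿ + i` is `xᵢ` for `i < n`, and the other leaves are copies
of the root. -/
def node (m : ℕ) : Fin (n + 1) ⊕ Ico 1 (2 ^ n) :=
  if h : m ∈ Ico 1 (2 ^ n) then .inr ⟨m, h⟩
  else if h' : m - 2 ^ n < n then .inl ⟨m - 2 ^ n, by omega⟩
  else .inr ⟨1, by simp [Nat.one_lt_two_pow hn.ne']⟩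

def heapVal (z : Fin (n + 1) → ℝ) (y : Ico 1 (2 ^ n) → ℝ) (m : ℕ) : ℝ :=
  Sum.elim z y (node hn m)

def linConstraint : Option (Fin n) → (Fin (n + 1) ⊕ Ico 1 (2 ^ n) → ℝ) →ₗ[ℝ] ℝ
  | none => LinearMap.proj (node hn 1) - LinearMap.proj (.inl (Fin.last n))
  | some i => LinearMap.proj (.inl i.castSucc)

variable {hn} {z : Fin (n + 1) → ℝ} {y : Ico 1 (2 ^ n) → ℝ}

theorem heapVal_of_mem {m : ℕ} (h : m ∈ Ico 1 (2 ^ n)) : heapVal hn z y m = y ⟨m, h⟩ := by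
  simp [heapVal, node, h]

theorem heapVal_leaf_of_lt {i : ℕ} (hi : i < n) :
    heapVal hn z y (2 ^ n + i) = z ⟨i, by omega⟩ := by
  simp [heapVal, node, hi]

theorem heapVal_leaf_of_le {i : ℕ} (hi : n ≤ i) :
    heapVal hn z y (2 ^ n + i) = heapVal hn z y 1 := by
  simp [heapVal, node, Nat.one_lt_two_pow hn.ne', show ¬ i < n by omega]

theorem prod_heapVal_leaves :
    ∏ i ∈ range (2 ^ n), heapVal hn z y (2 ^ n + i) =
      (∏ i : Fin n, z i.castSucc) * heapVal hn z y 1 ^ (2 ^ n - n) := by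
  rw [prod_range_eq_prod_mul_pow Nat.lt_two_pow_self.le fun i hi _ => heapVal_leaf_of_le hi,
    ← Fin.prod_univ_eq_prod_range]
  congr 1
  exact prod_congr rfl fun i _ => heapVal_leaf_of_lt i.2

theorem le_geomMean_of_heap (hx : ∀ i : Fin n, 0 ≤ z i.castSucc)
    (hroot : z (Fin.last n) ≤ heapVal hn z y 1)
    (hcone : ∀ m : Ico 1 (2 ^ n), InRotatedCone (heapVal hn z y m)
      (heapVal hn z y (2 * (m : ℕ))) (heapVal hn z y (2 * (m : ℕ) + 1))) :
    z (Fin.last n) ≤ (∏ i : Fin n, z i.castSucc) ^ ((1 : ℝ) / n) := by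
  refine hroot.trans (le_rpow_one_div_of_pow_le_mul_pow hn.ne' (prod_nonneg fun i _ => hx i)
    Nat.lt_two_pow_self.le ?_)
  rw [← prod_heapVal_leaves]
  exact root_pow_le_prod_leaves_of_inRotatedCone fun m hm1 hm =>
    hcone ⟨m, mem_Ico.2 ⟨hm1, hm⟩⟩

theorem exists_heap_of_le_geomMean (hx : ∀ i : Fin n, 0 ≤ z i.castSucc)
    (ht : z (Fin.last n) ≤ (∏ i : Fin n, z i.castSucc) ^ ((1 : ℝ) / n)) :
    ∃ y : Ico 1 (2 ^ n) → ℝ, z (Fin.last n) ≤ heapVal hn z y 1 ∧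
      ∀ m : Ico 1 (2 ^ n), InRotatedCone (heapVal hn z y m)
        (heapVal hn z y (2 * (m : ℕ))) (heapVal hn z y (2 * (m : ℕ) + 1)) := by
  set X := ∏ i : Fin n, z i.castSucc
  have hX : 0 ≤ X := prod_nonneg fun i _ => hx i
  set R := X ^ ((1 : ℝ) / n)
  have hR : 0 ≤ R := Real.rpow_nonneg hX _
  have hRX : R ^ n = X := by
    simp only [R, one_div]
    exact Real.rpow_inv_natCast_pow hX hn.ne'
  let leaf (m : ℕ) : ℝ := if h : m - 2 ^ n < n then z ⟨m - 2 ^ n, by omega⟩ else R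
  have hleaf (m : ℕ) : 0 ≤ leaf m := by
    unfold leaf
    split_ifs with h
    exacts [hx ⟨_, h⟩, hR]
  let val := sqrtTree n leaf
  have hval_x (i : ℕ) (hi : i < n) : val (2 ^ n + i) = z ⟨i, by omega⟩ := by
    simp [val, sqrtTree_of_le, leaf, hi]
  have hval_pad (i : ℕ) (hi : n ≤ i) : val (2 ^ n + i) = R := by
    simp [val, sqrtTree_of_le, leaf, show ¬ i < n by omega]
  have hval_root : val 1 = R := by
    refine (pow_left_inj₀ (sqrtTree_nonneg hleaf 1) hR (pow_ne_zero n two_ne_zero)).1 ?_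
    rw [root_pow_eq_prod_leaves_of_sq_eq fun m hm1 hm => sqrtTree_sq hleaf hm1 hm,
      prod_range_eq_prod_mul_pow Nat.lt_two_pow_self.le fun i hi _ => hval_pad i hi,
      ← Fin.prod_univ_eq_prod_range, prod_congr rfl fun (i : Fin n) _ => hval_x i i.2]
    show X * R ^ (2 ^ n - n) = R ^ 2 ^ n
    rw [← hRX, pow_mul_pow_sub _ Nat.lt_two_pow_self.le]
  let y : Ico 1 (2 ^ n) → ℝ := fun m => val m
  have hroot_mem : 1 ∈ Ico 1 (2 ^ n) := mem_Ico.2 ⟨le_rfl, Nat.one_lt_two_pow hn.ne'⟩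
  have hw (m : ℕ) (hm1 : 1 ≤ m) (hm : m < 2 * 2 ^ n) : heapVal hn z y m = val m := by
    by_cases hmn : m < 2 ^ n
    · exact heapVal_of_mem (mem_Ico.2 ⟨hm1, hmn⟩)
    obtain ⟨i, rfl⟩ := Nat.exists_eq_add_of_le (not_lt.1 hmn)
    by_cases hi : i < n
    · rw [heapVal_leaf_of_lt hi, hval_x i hi]
    · rw [heapVal_leaf_of_le (not_lt.1 hi), hval_pad i (not_lt.1 hi), heapVal_of_mem hroot_mem,
        ← hval_root]
  refine ⟨y, ?_, fun m => ?_⟩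
  · rw [heapVal_of_mem hroot_mem]
    exact ht.trans_eq hval_root.symm
  · obtain ⟨hm1, hm⟩ := mem_Ico.1 m.2
    rw [hw m hm1 (by omega), hw (2 * m) (by omega) (by omega),
      hw (2 * m + 1) (by omega) (by omega)]
    exact ⟨sqrtTree_nonneg hleaf _, sqrtTree_nonneg hleaf _, (sqrtTree_sq hleaf hm1 hm).le⟩

end GeomMeanHypograph

open GeomMeanHypograph in
/-- SOC-representability of the geometric mean: the hypograph
`{(x,t) : xᵢ ≥ 0 ∀i, t ≤ (x₁⋯xₙ)^{1/n}}` is SOC-representable. -/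
theorem stmt_2 (n : ℕ) (hn : 0 < n) :
    SOCRep {z : Fin (n + 1) → ℝ |
      (∀ i : Fin n, 0 ≤ z i.castSucc) ∧
      z (Fin.last n) ≤ (∏ i : Fin n, z i.castSucc) ^ ((1 : ℝ) / n)} := by
  refine socRep_of_rotatedCone_constraints (K := Ico 1 (2 ^ n)) (linConstraint hn)
    (fun m => LinearMap.proj (node hn m)) (fun m => LinearMap.proj (node hn (2 * (m : ℕ))))
    (fun m => LinearMap.proj (node hn (2 * (m : ℕ) + 1))) fun z => ?_
  simp only [Set.mem_ofPred_eq, Option.forall, linConstraint, LinearMap.sub_apply,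
    LinearMap.proj_apply, Sum.elim_inl, sub_nonneg]
  constructor
  · rintro ⟨hx, ht⟩
    obtain ⟨y, hroot, hcone⟩ := exists_heap_of_le_geomMean (hn := hn) hx ht
    exact ⟨y, ⟨hroot, hx⟩, hcone⟩
  · rintro ⟨y, ⟨hroot, hx⟩, hcone⟩
    exact ⟨hx, le_geomMean_of_heap hx hroot hcone⟩
end

section
/- Let H be a real m × n matrix with m ≤ n, let K be a real m × k matrix of full column rank k ≤ m, and let U be a nonsingular m × m matrix of the form U = [V, K] (with U = K when k = m), where V ∈ ℝ^{m×(m−k)}. Suppose HᵀU^{−T} = Q̃R̃ is a QR decomposition, where Q̃ is an n × n orthogonal matrix and R̃ is an n × m upper triangular matrix with R̃ᵢᵢ ≥ 0 for all i ∈ {1,…,m} and with the zero-row property (R̃ᵢᵢ = 0 implies R̃ᵢ₁ = … = R̃ᵢₘ = 0). Let L* be the k × k lower triangular matrix defined by (L*ᵀ)ᵢⱼ = R̃_{m−k+i, m−k+j} for i,j ∈ {1,…,k}. Then L*L*ᵀ is the minimum, with respect to the Löwner order, of the set {X(HHᵀ)Xᵀ : X ∈ ℝ^{k×m}, XK = I_k}: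 for every left inverse X of K the matrix X(HHᵀ)Xᵀ − L*L*ᵀ is positive semidefinite, and there exists a left inverse X₀ of K with X₀(HHᵀ)X₀ᵀ = L*L*ᵀ. Thus L*L*ᵀ is a Cholesky factorization of the information matrix C_K(HHᵀ) for the parameter subsystem given by K. -/
/-! Write `U = [V, K]` and let `R` be the top `m × m` block of `R̃`, so that `HHᵀ = U RᵀR Uᵀ`.
In the splitting of the indices matching `[V, K]`, `R` is block upper triangular with blocks
`R₁₁, R₁₂, R₂₂`, and `R₂₂ᵀ = L*`. A left inverse `X` of `K` satisfies `XU = [W, I]` with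
`W = XV`, whence `X HHᵀ Xᵀ = TᵀT + L*L*ᵀ` for `T = R₁₁Wᵀ + R₁₂`. The value `L*L*ᵀ` is attained
once `R₁₁Z = -R₁₂` has a solution, taking `X₀ = [Zᵀ, I] U⁻¹`; it does, because by the zero-row
property each vanishing diagonal entry of the triangular `R₁₁` comes with a vanishing row of
`[R₁₁, R₁₂]`. -/

open Matrix

namespace Matrix

variable {α ι κ m n p : Type*}

theorem transpose_mul_self_submatrix_of_rows_eq_zero [CommSemiring α] [Fintype m] [Fintype n]
    {f : m → n} (hf : Function.Injective f) {A : Matrix n p α}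
    (hA : ∀ i ∉ Set.range f, ∀ j, A i j = 0) :
    (A.submatrix f id)ᵀ * A.submatrix f id = Aᵀ * A := by
  ext j j'
  simp only [mul_apply, transpose_apply, submatrix_apply, id]
  exact Fintype.sum_of_injective f hf _ _ (fun i hi => by simp [hA i hi]) fun _ => rfl

theorem mul_transpose_self_eq_of_qr [CommRing α] [Fintype m] [Fintype n] [DecidableEq m]
    [DecidableEq n] {H : Matrix m n α} {U : Matrix m m α} (hU : IsUnit U.det) {Q : Matrix n n α}
    {R : Matrix n m α} (hQ : Qᵀ * Q = 1) (hQR : Hᵀ * (U⁻¹)ᵀ = Q * R) :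
    H * Hᵀ = U * (Rᵀ * R) * Uᵀ := by
  have hH : H = U * Rᵀ * Qᵀ := by
    have := congrArg (U * ·ᵀ) hQR
    simpa [transpose_mul, ← Matrix.mul_assoc, mul_nonsing_inv _ hU] using this
  rw [hH]
  simp only [transpose_mul, transpose_transpose, Matrix.mul_assoc]
  rw [← Matrix.mul_assoc Qᵀ, hQ, Matrix.one_mul]

theorem submatrix_mul_submatrix_mul_transpose_submatrix [CommSemiring α] [Fintype m] [Fintype ι]
    (U : Matrix n m α) (G : Matrix m m α) (e : ι ≃ m) :
    U.submatrix id e * G.submatrix e e * (U.submatrix id e)ᵀ = U * G * Uᵀ := by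
  rw [transpose_submatrix, submatrix_mul_equiv, submatrix_mul_equiv, submatrix_id_id]

theorem mul_mul_mul_transpose_mul_transpose [CommSemiring α] [Fintype m] [Fintype n]
    (X : Matrix p m α) (U : Matrix m n α) (G : Matrix n n α) :
    X * (U * G * Uᵀ) * Xᵀ = X * U * G * (X * U)ᵀ := by
  simp only [transpose_mul, Matrix.mul_assoc]

theorem fromCols_one_mul_mul_transpose_of_toBlocks₂₁_eq_zero [CommRing α] [Fintype ι]
    [Fintype κ] [DecidableEq κ] {R : Matrix (ι ⊕ κ) (ι ⊕ κ) α} (hR : R.toBlocks₂₁ = 0)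
    (W : Matrix κ ι α) :
    fromCols W (1 : Matrix κ κ α) * (Rᵀ * R) * (fromCols W (1 : Matrix κ κ α))ᵀ
      = (R.toBlocks₁₁ * Wᵀ + R.toBlocks₁₂)ᵀ * (R.toBlocks₁₁ * Wᵀ + R.toBlocks₁₂)
        + R.toBlocks₂₂ᵀ * R.toBlocks₂₂ := by
  have hRY : R * (fromCols W (1 : Matrix κ κ α))ᵀ
      = fromRows (R.toBlocks₁₁ * Wᵀ + R.toBlocks₁₂) R.toBlocks₂₂ := by
    conv_lhs => rw [← fromBlocks_toBlocks R, hR]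
    rw [transpose_fromCols, fromBlocks_mul_fromRows]
    simp
  calc fromCols W (1 : Matrix κ κ α) * (Rᵀ * R) * (fromCols W (1 : Matrix κ κ α))ᵀ
      = (R * (fromCols W (1 : Matrix κ κ α))ᵀ)ᵀ * (R * (fromCols W (1 : Matrix κ κ α))ᵀ) := by
        simp only [transpose_mul, transpose_transpose, Matrix.mul_assoc]
    _ = _ := by rw [hRY, transpose_fromRows, fromCols_mul_fromRows]

theorem diagonal_mul_eq_self_of_rows_eq_zero [Semiring α] [Fintype ι] [DecidableEq ι]
    (a : ι → α) [DecidablePred fun i => a i = 0] {N : Matrix ι n α}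
    (hN : ∀ i, a i = 0 → ∀ j, N i j = 0) :
    diagonal (fun i => if a i = 0 then (0 : α) else 1) * N = N := by
  ext i j
  rw [diagonal_mul]
  split_ifs with h
  · rw [zero_mul, hN i h j]
  · rw [one_mul]

theorem exists_mul_eq_of_isUpperTriangular [Field α] [Fintype ι] [LinearOrder ι]
    {A : Matrix ι ι α} (hA : A.IsUpperTriangular) {B : Matrix ι κ α}
    (hzero : ∀ i, A i i = 0 → (∀ j, A i j = 0) ∧ ∀ j, B i j = 0) :
    ∃ Z : Matrix ι κ α, A * Z = B := by
  classical
  -- Filling the zero diagonal entries of `A` with ones gives an invertible `A + D`, and the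
  -- projection `P` onto the other rows recovers `A` from it without changing `B`.
  set P : Matrix ι ι α := diagonal fun i => if A i i = 0 then 0 else 1
  set D : Matrix ι ι α := diagonal fun i => if A i i = 0 then 1 else 0
  have hPD : P * D = 0 := by
    rw [diagonal_mul_diagonal, ← diagonal_zero]
    congr 1
    funext i
    split_ifs <;> simp
  have hPM : P * (A + D) = A := by
    rw [Matrix.mul_add, hPD, add_zero,
      diagonal_mul_eq_self_of_rows_eq_zero _ fun i h => (hzero i h).1]
  have hM : IsUnit (A + D).det := by
    have hMtri : (A + D).IsUpperTriangular := fun i j hij => by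
      rw [add_apply, hA hij, zero_add]
      exact diagonal_apply_ne _ (ne_of_gt hij)
    rw [det_of_isUpperTriangular hMtri, isUnit_iff_ne_zero, Finset.prod_ne_zero_iff]
    intro i _
    by_cases h : A i i = 0 <;> simp [D, h]
  refine ⟨(A + D)⁻¹ * B, ?_⟩
  nth_rewrite 1 [← hPM]
  rw [Matrix.mul_assoc P, mul_nonsing_inv_cancel_left _ _ hM,
    diagonal_mul_eq_self_of_rows_eq_zero _ fun i h => (hzero i h).2]

theorem exists_mul_eq_one_and_mul_mul_transpose_eq [Field α] [Fintype m] [Fintype ι]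
    [Fintype κ] [LinearOrder ι] [DecidableEq κ] {V : Matrix m ι α} {K : Matrix m κ α}
    {U' : Matrix (ι ⊕ κ) m α} (hU' : U' * fromCols V K = 1) {R : Matrix (ι ⊕ κ) (ι ⊕ κ) α}
    (hR : R.toBlocks₂₁ = 0) (hR₁₁ : R.toBlocks₁₁.IsUpperTriangular)
    (hzero : ∀ i, R.toBlocks₁₁ i i = 0 →
      (∀ j, R.toBlocks₁₁ i j = 0) ∧ ∀ j, R.toBlocks₁₂ i j = 0) :
    ∃ X₀ : Matrix κ m α, X₀ * K = 1 ∧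
      X₀ * (fromCols V K * (Rᵀ * R) * (fromCols V K)ᵀ) * X₀ᵀ = R.toBlocks₂₂ᵀ * R.toBlocks₂₂ := by
  obtain ⟨Z, hZ⟩ := exists_mul_eq_of_isUpperTriangular hR₁₁ (B := -R.toBlocks₁₂)
    fun i h => ⟨(hzero i h).1, fun j => by rw [neg_apply, (hzero i h).2 j, neg_zero]⟩
  set X₀ := fromCols Zᵀ (1 : Matrix κ κ α) * U'
  have hX₀U : X₀ * fromCols V K = fromCols Zᵀ 1 := by rw [Matrix.mul_assoc, hU', Matrix.mul_one]
  have hX₀K : X₀ * K = 1 := by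
    rw [mul_fromCols] at hX₀U
    exact (fromCols_inj hX₀U).2
  refine ⟨X₀, hX₀K, ?_⟩
  rw [mul_mul_mul_transpose_mul_transpose, hX₀U,
    fromCols_one_mul_mul_transpose_of_toBlocks₂₁_eq_zero hR, transpose_transpose, hZ,
    neg_add_cancel, transpose_zero, Matrix.zero_mul, zero_add]

theorem posSemidef_mul_mul_transpose_sub_of_mul_eq_one [Fintype m] [Fintype ι] [Fintype κ]
    [DecidableEq κ] {V : Matrix m ι ℝ} {K : Matrix m κ ℝ} {R : Matrix (ι ⊕ κ) (ι ⊕ κ) ℝ}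
    (hR : R.toBlocks₂₁ = 0) {X : Matrix κ m ℝ} (hX : X * K = 1) :
    (X * (fromCols V K * (Rᵀ * R) * (fromCols V K)ᵀ) * Xᵀ
      - R.toBlocks₂₂ᵀ * R.toBlocks₂₂).PosSemidef := by
  have hXU : X * fromCols V K = fromCols (X * V) 1 := by rw [mul_fromCols, hX]
  rw [mul_mul_mul_transpose_mul_transpose, hXU,
    fromCols_one_mul_mul_transpose_of_toBlocks₂₁_eq_zero hR, add_sub_cancel_right,
    ← conjTranspose_eq_transpose_of_trivial]
  exact posSemidef_conjTranspose_mul_self _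

end Matrix

/-- `Sum.inl i ↦ i` and `Sum.inr j ↦ m - k + j`: the columns of `V` and of `K` in `U = [V, K]`. -/
def finSplitEquiv {m k : ℕ} (hk : k ≤ m) : Fin (m - k) ⊕ Fin k ≃ Fin m :=
  finSumFinEquiv.trans (finCongr (Nat.sub_add_cancel hk))

namespace Matrix.IsUpperTriangular

variable {α : Type*} [Zero α] {m k : ℕ} {R : Matrix (Fin m) (Fin m) α}

theorem toBlocks₂₁_submatrix_finSplitEquiv (hR : R.IsUpperTriangular) (hk : k ≤ m) :
    (R.submatrix (finSplitEquiv hk) (finSplitEquiv hk)).toBlocks₂₁ = 0 := by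
  ext i j
  exact hR (show (j : ℕ) < m - k + i by omega)

theorem toBlocks₁₁_submatrix_finSplitEquiv (hR : R.IsUpperTriangular) (hk : k ≤ m) :
    (R.submatrix (finSplitEquiv hk) (finSplitEquiv hk)).toBlocks₁₁.IsUpperTriangular :=
  fun _ _ hij => hR hij

end Matrix.IsUpperTriangular

/-- Lemma (Cholesky factorization of the information matrix): with
`H ∈ ℝ^{m×n}` (`m ≤ n`), `K ∈ ℝ^{m×k}` of full column rank (`k ≤ m`),
`U = [V, K]` nonsingular, and a QR decomposition `HᵀU^{−T} = Q̃R̃` with nonnegative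
diagonal and the zero-row property, the matrix `L*` extracted from the trailing
`k × k` block of `R̃` satisfies: `L*L*ᵀ` is the Löwner-minimum of
`{X(HHᵀ)Xᵀ : XK = I_k}`, i.e. `C_K(HHᵀ) = L*L*ᵀ`. -/
theorem stmt_4 (m n k : ℕ) (hm : m ≤ n) (hk : k ≤ m)
    (H : Matrix (Fin m) (Fin n) ℝ)
    (K : Matrix (Fin m) (Fin k) ℝ)
    (U : Matrix (Fin m) (Fin m) ℝ) (hU : IsUnit U.det)
    (hUK : ∀ (i : Fin m) (j : Fin k),
      U i ⟨m - k + (j : ℕ), by have := j.isLt; omega⟩ = K i j)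
    (Qt : Matrix (Fin n) (Fin n) ℝ) (Rt : Matrix (Fin n) (Fin m) ℝ)
    (hQorth : Qtᵀ * Qt = 1)
    (hQR : Hᵀ * (U⁻¹)ᵀ = Qt * Rt)
    (hRtri : ∀ (i : Fin n) (j : Fin m), (j : ℕ) < (i : ℕ) → Rt i j = 0)
    (hRzero : ∀ i : Fin m, Rt (Fin.castLE hm i) i = 0 →
      ∀ j : Fin m, Rt (Fin.castLE hm i) j = 0)
    (Lstar : Matrix (Fin k) (Fin k) ℝ)
    (hLstar : ∀ i j : Fin k,
      Lstar i j = Rt ⟨m - k + (j : ℕ), by have := j.isLt; omega⟩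
        ⟨m - k + (i : ℕ), by have := i.isLt; omega⟩) :
    (∀ X : Matrix (Fin k) (Fin m) ℝ, X * K = 1 →
      (X * (H * Hᵀ) * Xᵀ - Lstar * Lstarᵀ).PosSemidef) ∧
    ∃ X₀ : Matrix (Fin k) (Fin m) ℝ, X₀ * K = 1 ∧
      X₀ * (H * Hᵀ) * X₀ᵀ = Lstar * Lstarᵀ := by
  set e := finSplitEquiv hk
  set R₀ := Rt.submatrix (Fin.castLE hm) id
  set R := R₀.submatrix e e
  have hR₀ : R₀.IsUpperTriangular := fun i j hij => hRtri _ j hij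
  have hR₂₁ : R.toBlocks₂₁ = 0 := hR₀.toBlocks₂₁_submatrix_finSplitEquiv hk
  have hUe : U.submatrix id e = fromCols (U.submatrix id (e ∘ Sum.inl)) K := by
    ext i (j | j)
    · rfl
    · exact hUK i j
  have hHH : H * Hᵀ = U.submatrix id e * (Rᵀ * R) * (U.submatrix id e)ᵀ := by
    have hRt : ∀ i ∉ Set.range (Fin.castLE hm), ∀ j, Rt i j = 0 := fun i hi j =>
      hRtri i j (by by_contra! h; exact hi ⟨⟨i, by omega⟩, rfl⟩)
    rw [mul_transpose_self_eq_of_qr hU hQorth hQR,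
      ← transpose_mul_self_submatrix_of_rows_eq_zero (Fin.castLE_injective hm) hRt,
      ← submatrix_mul_submatrix_mul_transpose_submatrix U _ e]
    simp only [R, R₀, transpose_submatrix, submatrix_mul_equiv]
  have hL : Lstar * Lstarᵀ = R.toBlocks₂₂ᵀ * R.toBlocks₂₂ := by
    rw [show Lstar = R.toBlocks₂₂ᵀ from Matrix.ext hLstar, transpose_transpose]
  have hU' : (U⁻¹).submatrix e id * fromCols (U.submatrix id (e ∘ Sum.inl)) K = 1 := by
    rw [← hUe, ← submatrix_mul _ _ _ _ _ Function.bijective_id, nonsing_inv_mul _ hU,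
      submatrix_one_equiv]
  rw [hHH, hUe, hL]
  exact ⟨fun X hX => posSemidef_mul_mul_transpose_sub_of_mul_eq_one hR₂₁ hX,
    exists_mul_eq_one_and_mul_mul_transpose_eq hU' hR₂₁ (hR₀.toBlocks₁₁_submatrix_finSplitEquiv hk)
      fun i h => ⟨fun j => hRzero _ h _, fun j => hRzero _ h _⟩⟩
end

section
/- Let H be a real m × n matrix with m ≤ n, let K be a real m × k matrix of full column rank k ≤ m, assume that every column of K lies in the column space of HHᵀ, and let G be any matrix satisfying (HHᵀ)G(HHᵀ) = HHᵀ. Then KᵀGK is positive definite, and for every Q ∈ ℝ^{n×k} and every lower triangular L ∈ ℝ^{k×k} such that HQ = KL and each column of Q has Euclidean norm at most 1 (‖Qeⱼ‖ ≤ 1 for all j ∈ {1,…,k}), the inequality (det L)² · det(KᵀGK) ≤ 1 holds. -/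
/-!
Write `K = HHᵀV` and `W = HᵀV`. Then `HW = K` and `KᵀGK = VᵀHHᵀV = WᵀW`, a Gram matrix of the
injective map `W`, hence positive definite. For a feasible `(Q, L)` the identity
`WᵀQ = VᵀKL = WᵀWL` says that `WL` is the orthogonal projection of `Q` onto the range of `W`,
so `tr (Lᵀ WᵀW L) = ‖WL‖²_F ≤ ‖Q‖²_F ≤ k`. AM–GM on the eigenvalues of the positive semidefinite
matrix `Lᵀ WᵀW L` then bounds its determinant `(det L)² det (WᵀW)` by `1`.
-/

open Matrix

/-- AM–GM in the form `∏ μᵢ ≤ ∏ exp (μᵢ - 1) = exp (∑ μᵢ - card ι)`. -/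
theorem Real.prod_le_one_of_sum_le_card {ι : Type*} [Fintype ι] {μ : ι → ℝ}
    (h0 : ∀ i, 0 ≤ μ i) (hsum : ∑ i, μ i ≤ Fintype.card ι) : ∏ i, μ i ≤ 1 :=
  calc ∏ i, μ i ≤ ∏ i, Real.exp (μ i - 1) :=
        Finset.prod_le_prod (fun i _ ↦ h0 i) fun i _ ↦ by
          linarith [Real.add_one_le_exp (μ i - 1)]
    _ = Real.exp (∑ i, μ i - Fintype.card ι) := by
        simp [← Real.exp_sum, Finset.sum_sub_distrib]
    _ ≤ 1 := Real.exp_le_one_iff.mpr (by linarith)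

namespace Matrix

variable {m n p : Type*}

theorem PosSemidef.det_le_one_of_trace_le_card [Fintype n] [DecidableEq n] {B : Matrix n n ℝ}
    (hB : B.PosSemidef) (htr : B.trace ≤ Fintype.card n) : B.det ≤ 1 := by
  rw [hB.1.trace_eq_sum_eigenvalues] at htr
  rw [hB.1.det_eq_prod_eigenvalues]
  exact_mod_cast Real.prod_le_one_of_sum_le_card hB.eigenvalues_nonneg (by exact_mod_cast htr)

theorem trace_transpose_mul_self_le_card [Fintype m] [Fintype n] {Q : Matrix m n ℝ}
    (hQ : ∀ j, √(∑ i, Q i j ^ 2) ≤ 1) : (Qᵀ * Q).trace ≤ Fintype.card n :=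
  calc (Qᵀ * Q).trace = ∑ j, ∑ i, Q i j ^ 2 := by simp [trace, mul_apply, sq]
    _ ≤ ∑ _j : n, 1 := Finset.sum_le_sum fun j _ ↦ Real.sqrt_le_one.mp (hQ j)
    _ = Fintype.card n := by simp

theorem trace_transpose_mul_gram_mul_le [Fintype m] [Fintype n] [Fintype p] {W : Matrix m n ℝ}
    {Q : Matrix m p ℝ} {L : Matrix n p ℝ} (hWQ : Wᵀ * Q = Wᵀ * W * L) :
    (Lᵀ * (Wᵀ * W) * L).trace ≤ (Qᵀ * Q).trace := by
  set R := Q - W * L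
  have hWR : Wᵀ * R = 0 := by
    simp only [R, Matrix.mul_sub, hWQ, Matrix.mul_assoc, sub_self]
  have hRW : Rᵀ * W = 0 := by
    rw [← transpose_transpose W, ← transpose_mul, hWR, transpose_zero]
  have hpyth : Qᵀ * Q = Lᵀ * (Wᵀ * W) * L + Rᵀ * R := by
    have hQ : Q = W * L + R := by simp [R]
    rw [hQ]
    simp only [transpose_add, transpose_mul, Matrix.add_mul, Matrix.mul_add, Matrix.mul_assoc]
    rw [← Matrix.mul_assoc Rᵀ W L, hRW, hWR]
    simp
  rw [hpyth, trace_add]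
  have hR := (posSemidef_conjTranspose_mul_self R).trace_nonneg
  rw [conjTranspose_eq_transpose_of_trivial] at hR
  linarith

theorem mulVec_injective_of_rank_eq_card [Fintype n] {K : Matrix m n ℝ}
    (hK : K.rank = Fintype.card n) :
    Function.Injective K.mulVec := by
  have hrn := K.mulVecLin.finrank_range_add_finrank_ker
  rw [Module.finrank_fintype_fun_eq_card] at hrn
  change Function.Injective K.mulVecLin
  rw [← LinearMap.ker_eq_bot, ← Submodule.finrank_eq_zero]
  rw [rank] at hK
  omega

theorem transpose_mul_mul_eq_of_mul_mul_eq [Fintype m] {A G : Matrix m m ℝ} (hA : Aᵀ = A)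
    (hG : A * G * A = A) (V : Matrix m n ℝ) : (A * V)ᵀ * G * (A * V) = Vᵀ * A * V := by
  calc (A * V)ᵀ * G * (A * V) = Vᵀ * (A * G * A) * V := by
        simp only [transpose_mul, hA, Matrix.mul_assoc]
    _ = Vᵀ * A * V := by rw [hG]

theorem exists_mul_eq_of_forall_mulVec_eq [Fintype n] {A : Matrix m n ℝ} {K : Matrix m p ℝ}
    (h : ∀ j, ∃ v, A *ᵥ v = fun i ↦ K i j) : ∃ V : Matrix n p ℝ, A * V = K := by
  choose v hv using h
  exact ⟨of fun i j ↦ v j i, by ext i j; exact congrFun (hv j) i⟩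

end Matrix

theorem stmt_5_general (m n k : ℕ)
    (H : Matrix (Fin m) (Fin n) ℝ)
    (K : Matrix (Fin m) (Fin k) ℝ) (hK : K.rank = k)
    (hest : ∀ j : Fin k, ∃ v : Fin m → ℝ, (H * Hᵀ) *ᵥ v = fun i => K i j)
    (G : Matrix (Fin m) (Fin m) ℝ)
    (hG : (H * Hᵀ) * G * (H * Hᵀ) = H * Hᵀ) :
    (Kᵀ * G * K).PosDef ∧
    ∀ (Q : Matrix (Fin n) (Fin k) ℝ) (L : Matrix (Fin k) (Fin k) ℝ),
      (∀ i j : Fin k, (i : ℕ) < (j : ℕ) → L i j = 0) →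
      H * Q = K * L →
      (∀ j : Fin k, Real.sqrt (∑ i, Q i j ^ 2) ≤ 1) →
      L.det ^ 2 * (Kᵀ * G * K).det ≤ 1 := by
  obtain ⟨V, hV⟩ := exists_mul_eq_of_forall_mulVec_eq hest
  set W := Hᵀ * V
  have hHW : H * W = K := by rw [← hV, Matrix.mul_assoc]
  have hgram : Kᵀ * G * K = Wᵀ * W := by
    rw [← hV, transpose_mul_mul_eq_of_mul_mul_eq (by simp [transpose_mul]) hG]
    simp only [W, transpose_mul, transpose_transpose, Matrix.mul_assoc]
  have hW : Function.Injective W.mulVec := fun x y hxy ↦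
    mulVec_injective_of_rank_eq_card (by simpa using hK) <| by
      rw [← hHW, ← mulVec_mulVec x H W, ← mulVec_mulVec y H W, hxy]
  have hpd : (Wᵀ * W).PosDef := by
    simpa [conjTranspose_eq_transpose_of_trivial] using PosDef.conjTranspose_mul_self W hW
  refine ⟨hgram ▸ hpd, fun Q L _ hHQ hQ ↦ ?_⟩
  have hWQ : Wᵀ * Q = Wᵀ * W * L := by
    simp only [W, transpose_mul, transpose_transpose, Matrix.mul_assoc, hHQ, ← hHW]
  have hpsd : (Lᵀ * (Wᵀ * W) * L).PosSemidef := by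
    simpa [conjTranspose_eq_transpose_of_trivial] using hpd.posSemidef.conjTranspose_mul_mul_same L
  have hdet := hpsd.det_le_one_of_trace_le_card
    ((trace_transpose_mul_gram_mul_le hWQ).trans (trace_transpose_mul_self_le_card hQ))
  rw [det_mul, det_mul, det_transpose] at hdet
  rw [hgram]
  linarith

/-- Under the estimability condition `range K ⊆ range HHᵀ`, for any generalized inverse
`G` of `HHᵀ`, the matrix `KᵀGK` is positive definite, and every feasible pair `(Q, L)`
of the SOCP (with `L` lower triangular, `HQ = KL`, and unit-norm-bounded columns of `Q`)
satisfies `(det L)² · det(KᵀGK) ≤ 1`, i.e. `(det L)² ≤ det C_K(HHᵀ)`. -/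
theorem stmt_5 (m n k : ℕ) (hm : m ≤ n) (hk : k ≤ m)
    (H : Matrix (Fin m) (Fin n) ℝ)
    (K : Matrix (Fin m) (Fin k) ℝ) (hK : K.rank = k)
    (hest : ∀ j : Fin k, ∃ v : Fin m → ℝ, (H * Hᵀ) *ᵥ v = fun i => K i j)
    (G : Matrix (Fin m) (Fin m) ℝ)
    (hG : (H * Hᵀ) * G * (H * Hᵀ) = H * Hᵀ) :
    (Kᵀ * G * K).PosDef ∧
    ∀ (Q : Matrix (Fin n) (Fin k) ℝ) (L : Matrix (Fin k) (Fin k) ℝ),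
      (∀ i j : Fin k, (i : ℕ) < (j : ℕ) → L i j = 0) →
      H * Q = K * L →
      (∀ j : Fin k, Real.sqrt (∑ i, Q i j ^ 2) ≤ 1) →
      L.det ^ 2 * (Kᵀ * G * K).det ≤ 1 :=
  stmt_5_general m n k H K hK hest G hG
end

section
/- Let H be a real m × n matrix with m ≤ n, let K be a real m × k matrix of full column rank k ≤ m, assume that every column of K lies in the column space of HHᵀ, and let G be any matrix satisfying (HHᵀ)G(HHᵀ) = HHᵀ. Then there exist Q ∈ ℝ^{n×k} and a lower triangular L ∈ ℝ^{k×k} such that HQ = KL, each column of Q has Euclidean norm at most 1, and (det L)² · det(KᵀGK) = 1; that is, the maximum of det L over this feasible set is attained and its square equals det C_K(HHᵀ) = 1/det(KᵀGK). -/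
/-!
Solve `HHᵀ V = K` column by column and put `W = HᵀV`, so that `HW = K`; since `G` is a
generalized inverse of `HHᵀ`, `KᵀGK = VᵀHHᵀV = WᵀW`. As `K = HW` has full column rank, `W` is
injective and `WᵀW` is positive definite. A lower triangular Cholesky factor `L` of `(WᵀW)⁻¹`
satisfies `Lᵀ(WᵀW)L = 1`, so `Q = WL` has orthonormal columns, `HQ = KL`, and taking
determinants gives `(det L)² det(KᵀGK) = 1`.
-/

open Matrix
open scoped ComplexOrder

theorem LDL.lower_isLowerTriangular {𝕜 n : Type*} [RCLike 𝕜] [Fintype n] [LinearOrder n]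
    [WellFoundedLT n] [LocallyFiniteOrderBot n] {S : Matrix n n 𝕜} (hS : S.PosDef) :
    (LDL.lower hS).IsLowerTriangular :=
  blockTriangular_inv_of_blockTriangular fun _ _ hij => LDL.lowerInv_triangular hS hij

theorem LDL.diagEntries_nonneg {n : Type*} [Fintype n] [LinearOrder n] [WellFoundedLT n]
    [LocallyFiniteOrderBot n] {S : Matrix n n ℝ} (hS : S.PosDef) (i : n) :
    0 ≤ LDL.diagEntries hS i := by
  have h := hS.posSemidef.mul_mul_conjTranspose_same (LDL.lowerInv hS)
  rw [← LDL.diag_eq_lowerInv_conj, LDL.diag, posSemidef_diagonal_iff] at h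
  exact h i

namespace Matrix.PosDef

variable {n : Type*} [Fintype n] [LinearOrder n] [WellFoundedLT n] [LocallyFiniteOrderBot n]
  {S : Matrix n n ℝ}

theorem exists_isLowerTriangular_mul_transpose_eq (hS : S.PosDef) :
    ∃ L : Matrix n n ℝ, L.IsLowerTriangular ∧ L * Lᵀ = S := by
  set r : n → ℝ := fun i => √(LDL.diagEntries hS i)
  refine ⟨LDL.lower hS * diagonal r,
    (LDL.lower_isLowerTriangular hS).mul (blockTriangular_diagonal r), ?_⟩
  have hr : diagonal r * diagonal r = LDL.diag hS := by
    rw [diagonal_mul_diagonal, LDL.diag]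
    exact congrArg diagonal (funext fun i => Real.mul_self_sqrt (LDL.diagEntries_nonneg hS i))
  conv_rhs => rw [← LDL.lower_conj_diag hS, ← hr]
  rw [transpose_mul, diagonal_transpose, conjTranspose_eq_transpose_of_trivial]
  simp only [Matrix.mul_assoc]

theorem exists_isLowerTriangular_transpose_mul_mul_eq_one (hS : S.PosDef) :
    ∃ L : Matrix n n ℝ, L.IsLowerTriangular ∧ Lᵀ * S * L = 1 := by
  obtain ⟨L, hL, hLL⟩ := hS.inv.exists_isLowerTriangular_mul_transpose_eq
  refine ⟨L, hL, ?_⟩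
  have : L * (Lᵀ * S) = 1 := by
    rw [← Matrix.mul_assoc, hLL, nonsing_inv_mul _ ((isUnit_iff_isUnit_det S).mp hS.isUnit)]
  exact mul_eq_one_comm.mp this

end Matrix.PosDef

namespace Matrix

variable {R : Type*} {m n p : Type*}

theorem exists_mul_eq_of_forall_exists_mulVec_eq [Fintype n] [NonUnitalNonAssocSemiring R]
    {M : Matrix m n R} {K : Matrix m p R} (h : ∀ j, ∃ v : n → R, M *ᵥ v = fun i => K i j) :
    ∃ V : Matrix n p R, M * V = K := by
  choose v hv using h
  exact ⟨of fun i j => v j i, ext fun i j => congrFun (hv j) i⟩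

theorem transpose_mul_mul_mul_eq_of_mul_mul_self [Fintype m] [CommRing R] {M G : Matrix m m R}
    (hM : Mᵀ = M) (hG : M * G * M = M) (V : Matrix m p R) :
    (M * V)ᵀ * G * (M * V) = Vᵀ * M * V := by
  rw [transpose_mul, hM]
  calc Vᵀ * M * G * (M * V) = Vᵀ * (M * G * M) * V := by simp only [Matrix.mul_assoc]
    _ = Vᵀ * M * V := by rw [hG, Matrix.mul_assoc]

theorem mulVec_injective_of_rank_eq_card_s6 [Fintype n] [Field R] {A : Matrix m n R}
    (h : A.rank = Fintype.card n) : Function.Injective A.mulVec := by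
  rw [mulVec_injective_iff, linearIndependent_iff_card_eq_finrank_span]
  exact h.symm.trans A.rank_eq_finrank_span_cols

theorem sum_sq_col_eq_one_of_transpose_mul_self_eq_one [Fintype m] [CommSemiring R]
    [DecidableEq n] {Q : Matrix m n R} (hQ : Qᵀ * Q = 1) (j : n) : ∑ i, Q i j ^ 2 = 1 := by
  simpa only [mul_apply, transpose_apply, one_apply_eq, sq] using congrFun (congrFun hQ j) j

end Matrix

theorem stmt_6_general (m n k : ℕ)
    (H : Matrix (Fin m) (Fin n) ℝ)
    (K : Matrix (Fin m) (Fin k) ℝ) (hK : K.rank = k)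
    (hest : ∀ j : Fin k, ∃ v : Fin m → ℝ, (H * Hᵀ) *ᵥ v = fun i => K i j)
    (G : Matrix (Fin m) (Fin m) ℝ)
    (hG : (H * Hᵀ) * G * (H * Hᵀ) = H * Hᵀ) :
    ∃ (Q : Matrix (Fin n) (Fin k) ℝ) (L : Matrix (Fin k) (Fin k) ℝ),
      (∀ i j : Fin k, (i : ℕ) < (j : ℕ) → L i j = 0) ∧
      H * Q = K * L ∧
      (∀ j : Fin k, Real.sqrt (∑ i, Q i j ^ 2) ≤ 1) ∧
      L.det ^ 2 * (Kᵀ * G * K).det = 1 := by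
  obtain ⟨V, hV⟩ := exists_mul_eq_of_forall_exists_mulVec_eq hest
  set W := Hᵀ * V
  have hHW : H * W = K := by rw [← Matrix.mul_assoc, hV]
  have hKGK : Kᵀ * G * K = Wᵀ * W := by
    rw [← hV, transpose_mul_mul_mul_eq_of_mul_mul_self (by simp) hG, transpose_mul,
      transpose_transpose]
    simp only [W, Matrix.mul_assoc]
  have hW : Function.Injective W.mulVec := by
    refine mulVec_injective_of_rank_eq_card_s6 (le_antisymm (rank_le_card_width W) ?_)
    simpa [← hK, ← hHW] using rank_mul_le_right H W
  obtain ⟨L, hL, hLAL⟩ :=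
    (PosDef.conjTranspose_mul_self W hW).exists_isLowerTriangular_transpose_mul_mul_eq_one
  have hQ : (W * L)ᵀ * (W * L) = 1 := by
    rw [← hLAL, transpose_mul, conjTranspose_eq_transpose_of_trivial]
    simp only [Matrix.mul_assoc]
  refine ⟨W * L, L, fun i j hij => hL hij, by rw [← Matrix.mul_assoc, hHW],
    fun j => by rw [sum_sq_col_eq_one_of_transpose_mul_self_eq_one hQ, Real.sqrt_one], ?_⟩
  have hdet := congrArg det hLAL
  rw [det_mul, det_mul, det_transpose, det_one, conjTranspose_eq_transpose_of_trivial] at hdet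
  rw [hKGK, ← hdet]
  ring

/-- Attainment in the SOCP for the `D_K`-criterion: under the estimability condition,
there is a feasible pair `(Q, L)` (with `L` lower triangular, `HQ = KL`, unit-norm-bounded
columns of `Q`) achieving `(det L)² · det(KᵀGK) = 1`, i.e.
`(det L)² = det C_K(HHᵀ) = 1/det(KᵀGK)`. -/
theorem stmt_6 (m n k : ℕ) (hm : m ≤ n) (hk : k ≤ m)
    (H : Matrix (Fin m) (Fin n) ℝ)
    (K : Matrix (Fin m) (Fin k) ℝ) (hK : K.rank = k)
    (hest : ∀ j : Fin k, ∃ v : Fin m → ℝ, (H * Hᵀ) *ᵥ v = fun i => K i j)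
    (G : Matrix (Fin m) (Fin m) ℝ)
    (hG : (H * Hᵀ) * G * (H * Hᵀ) = H * Hᵀ) :
    ∃ (Q : Matrix (Fin n) (Fin k) ℝ) (L : Matrix (Fin k) (Fin k) ℝ),
      (∀ i j : Fin k, (i : ℕ) < (j : ℕ) → L i j = 0) ∧
      H * Q = K * L ∧
      (∀ j : Fin k, Real.sqrt (∑ i, Q i j ^ 2) ≤ 1) ∧
      L.det ^ 2 * (Kᵀ * G * K).det = 1 :=
  stmt_6_general m n k H K hK hest G hG
end

section
/- Let A₁,…,A_s be real matrices with Aᵢ of size m × ℓᵢ, let w ∈ ℝ₊ˢ, let K be an m × k matrix, and let H be the m × (ℓ₁+…+ℓ_s) matrix obtained by horizontally concatenating the blocks √w₁A₁, …, √w_sA_s. Suppose Zᵢ ∈ ℝ^{ℓᵢ×k}, tᵢⱼ ≥ 0, and a lower triangular J ∈ ℝ^{k×k} satisfy Σᵢ AᵢZᵢ = KJ, ‖Zᵢeⱼ‖² ≤ tᵢⱼwᵢ for all i ∈ {1,…,s}, j ∈ {1,…,k}, and Σᵢ tᵢⱼ ≤ Jⱼⱼ for all j. Then there exist Q ∈ ℝ^{(ℓ₁+…+ℓ_s)×k}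 and a lower triangular L ∈ ℝ^{k×k} such that HQ = KL, every column of Q has Euclidean norm at most 1, and Jⱼⱼ = Lⱼⱼ² for all j ∈ {1,…,k}; in particular det J = (det L)². -/
/-!
Substitute `Qᵢ = Zᵢ D / √wᵢ` and `L = J D` with `D = diag(Jⱼⱼ^{-1/2})`. Then
`H Q = (∑ᵢ AᵢZᵢ) D = K J D = K L`, `L` stays lower triangular with `Lⱼⱼ = √Jⱼⱼ`, and the
squared norm of column `j` of `Q` is `∑ᵢ ‖Zᵢeⱼ‖² / (wᵢ Jⱼⱼ) ≤ ∑ᵢ tᵢⱼ / Jⱼⱼ ≤ 1`.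
A block with `wᵢ = 0` has `Zᵢ = 0` by the norm constraint, and a column with `Jⱼⱼ = 0`
is sent to zero by the convention `0⁻¹ = 0`, so neither case needs separate treatment.
-/

open Matrix Finset

theorem sum_sq_inv_sqrt_mul_le {ρ : Type*} [Fintype ρ] {z : ρ → ℝ} {w t : ℝ}
    (hw : 0 ≤ w) (ht : 0 ≤ t) (hz : ∑ r, z r ^ 2 ≤ t * w) :
    ∑ r, ((√w)⁻¹ * z r) ^ 2 ≤ t := by
  simp_rw [mul_pow, inv_pow, Real.sq_sqrt hw, ← mul_sum]
  exact inv_mul_le_of_le_mul₀ hw ht (by rwa [mul_comm])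

namespace Matrix

variable {ι : Type*} [Fintype ι] {κ : ι → Type*} [∀ i, Fintype (κ i)] {m n α : Type*}

def concatCols (A : ∀ i, Matrix m (κ i) α) : Matrix m (Σ i, κ i) α :=
  of fun r p => A p.1 r p.2

def concatRows (Z : ∀ i, Matrix (κ i) n α) : Matrix (Σ i, κ i) n α :=
  of fun p j => Z p.1 p.2 j

theorem concatCols_mul_concatRows [NonUnitalNonAssocSemiring α]
    (A : ∀ i, Matrix m (κ i) α) (Z : ∀ i, Matrix (κ i) n α) :
    concatCols A * concatRows Z = ∑ i, A i * Z i := by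
  ext r j
  simp [concatCols, concatRows, mul_apply, Fintype.sum_sigma, sum_apply]

theorem eq_zero_of_sum_sq_col_nonpos {ρ : Type*} [Fintype ρ] {M : Matrix ρ n ℝ}
    (h : ∀ j, ∑ r, M r j ^ 2 ≤ 0) : M = 0 := by
  ext r j
  have hcol := (Fintype.sum_eq_zero_iff_of_nonneg fun r => sq_nonneg (M r j)).mp
    (le_antisymm (h j) (Fintype.sum_nonneg fun r => sq_nonneg (M r j)))
  exact pow_eq_zero_iff two_ne_zero |>.mp (congrFun hcol r)

theorem det_eq_det_sq_of_diag_eq_sq [LinearOrder n] [Fintype n] [DecidableEq n] [CommRing α]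
    {J L : Matrix n n α} (hJ : J.IsLowerTriangular) (hL : L.IsLowerTriangular)
    (h : ∀ j, J j j = L j j ^ 2) : J.det = L.det ^ 2 := by
  rw [det_of_isLowerTriangular J hJ, det_of_isLowerTriangular L hL, ← prod_pow]
  exact prod_congr rfl fun j _ => h j

theorem sqrt_smul_inv_sqrt_smul_of_sum_sq_le {ρ : Type*} [Fintype ρ] {Z : Matrix ρ n ℝ}
    {w : ℝ} {t : n → ℝ} (hw : 0 ≤ w) (hZ : ∀ j, ∑ r, Z r j ^ 2 ≤ t j * w) :
    √w • (√w)⁻¹ • Z = Z := by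
  rcases hw.eq_or_lt with rfl | hw
  · simp [eq_zero_of_sum_sq_col_nonpos fun j => by simpa using hZ j]
  · exact smul_inv_smul₀ (Real.sqrt_pos.mpr hw).ne' Z

theorem sum_sq_concatRows_inv_sqrt_smul_le {Z : ∀ i, Matrix (κ i) n ℝ} {w : ι → ℝ}
    {t : ι → n → ℝ} (hw : ∀ i, 0 ≤ w i) (ht : ∀ i j, 0 ≤ t i j)
    (hZ : ∀ i j, ∑ r, Z i r j ^ 2 ≤ t i j * w i)
    (j : n) : ∑ p, concatRows (fun i => (√(w i))⁻¹ • Z i) p j ^ 2 ≤ ∑ i, t i j := by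
  simp only [concatRows, of_apply, Matrix.smul_apply, smul_eq_mul, Fintype.sum_sigma]
  exact sum_le_sum fun i _ => sum_sq_inv_sqrt_mul_le (hw i) (ht i j) (hZ i j)

end Matrix

/-- Change of variables in the proof of Theorem `det_socr`: a feasible point
`(Zᵢ, tᵢⱼ, J)` of the SOCP yields a feasible pair `(Q, L)` for the problem with
`H = [√w₁A₁, …, √w_sA_s]`, with `Jⱼⱼ = Lⱼⱼ²` for all `j`, hence `det J = (det L)²`. -/
theorem stmt_9 (s m k : ℕ) (ℓ : Fin s → ℕ)
    (A : (i : Fin s) → Matrix (Fin m) (Fin (ℓ i)) ℝ)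
    (w : Fin s → ℝ) (hw : ∀ i, 0 ≤ w i)
    (K : Matrix (Fin m) (Fin k) ℝ)
    (H : Matrix (Fin m) ((i : Fin s) × Fin (ℓ i)) ℝ)
    (hH : ∀ (r : Fin m) (p : (i : Fin s) × Fin (ℓ i)),
      H r p = Real.sqrt (w p.1) * A p.1 r p.2)
    (Z : (i : Fin s) → Matrix (Fin (ℓ i)) (Fin k) ℝ)
    (t : Fin s → Fin k → ℝ) (ht : ∀ i j, 0 ≤ t i j)
    (J : Matrix (Fin k) (Fin k) ℝ)
    (hJtri : ∀ a b : Fin k, (a : ℕ) < (b : ℕ) → J a b = 0)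
    (hAZ : ∑ i, A i * Z i = K * J)
    (hZ : ∀ (i : Fin s) (j : Fin k), (∑ r, Z i r j ^ 2) ≤ t i j * w i)
    (hsum : ∀ j : Fin k, ∑ i, t i j ≤ J j j) :
    ∃ (Q : Matrix ((i : Fin s) × Fin (ℓ i)) (Fin k) ℝ)
      (L : Matrix (Fin k) (Fin k) ℝ),
      (∀ a b : Fin k, (a : ℕ) < (b : ℕ) → L a b = 0) ∧
      H * Q = K * L ∧
      (∀ j : Fin k, Real.sqrt (∑ p, Q p j ^ 2) ≤ 1) ∧
      (∀ j : Fin k, J j j = L j j ^ 2) ∧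
      J.det = L.det ^ 2 := by
  have hJdiag : ∀ j, 0 ≤ J j j := fun j => (Fintype.sum_nonneg fun i => ht i j).trans (hsum j)
  have hH' : H = concatCols fun i => √(w i) • A i := by
    ext r p
    simp [concatCols, hH]
  set d : Fin k → ℝ := fun j => (√(J j j))⁻¹
  set L := J * diagonal d
  have hJlow : J.IsLowerTriangular := fun a b hab => hJtri a b hab
  have hLlow : L.IsLowerTriangular := hJlow.mul (blockTriangular_diagonal d)
  have hLdiag : ∀ j, L j j = √(J j j) := fun j => by
    simp only [L, d, mul_diagonal, ← div_eq_mul_inv, Real.div_sqrt]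
  refine ⟨concatRows (fun i => (√(w i))⁻¹ • Z i) * diagonal d, L,
    fun a b hab => hLlow hab, ?_, fun j => ?_, fun j => ?_, ?_⟩
  · rw [hH', ← Matrix.mul_assoc, concatCols_mul_concatRows]
    simp_rw [Matrix.smul_mul, ← Matrix.mul_smul,
      sqrt_smul_inv_sqrt_smul_of_sum_sq_le (hw _) (hZ _), hAZ, L, Matrix.mul_assoc]
  · have hd : d j ^ 2 = (J j j)⁻¹ := by rw [inv_pow, Real.sq_sqrt (hJdiag j)]
    rw [Real.sqrt_le_one]
    simp only [mul_diagonal, mul_pow _ (d j), ← sum_mul, hd]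
    exact (mul_le_mul_of_nonneg_right (sum_sq_concatRows_inv_sqrt_smul_le hw ht hZ j)
      (inv_nonneg.mpr (hJdiag j))).trans (mul_inv_le_one_of_le₀ (hsum j) (hJdiag j))
  · rw [hLdiag, Real.sq_sqrt (hJdiag j)]
  · exact det_eq_det_sq_of_diag_eq_sq hJlow hLlow fun j => by
      rw [hLdiag, Real.sq_sqrt (hJdiag j)]
end

section
/- Let A₁,…,A_s be real matrices with Aᵢ of size m × ℓᵢ, let w ∈ ℝ₊ˢ, let K be an m × k matrix, and let H be the m × (ℓ₁+…+ℓ_s) matrix obtained by horizontally concatenating the blocks √w₁A₁, …, √w_sA_s. Suppose Q ∈ ℝ^{(ℓ₁+…+ℓ_s)×k} and a lower triangular L ∈ ℝ^{k×k} satisfy HQ = KL and every column of Q has Euclidean norm at most 1. Then there exist matrices Zᵢ ∈ ℝ^{ℓᵢ×k}, scalars tᵢⱼ ≥ 0 and a lower triangular J ∈ ℝ^{k×k} such that Σᵢ AᵢZᵢ = KJ, ‖Zᵢeⱼ‖² ≤ tᵢⱼwᵢ for all i,j, Σᵢ tᵢⱼ ≤ Jⱼⱼ for all j, and Jⱼⱼ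 = Lⱼⱼ² for all j ∈ {1,…,k}; in particular det J = (det L)². -/
open Matrix

/-!
With `D = diag(L₁₁, …, L_kk)`, take `J = L D` and `Zᵢ = √wᵢ Qᵢ D`, where `Qᵢ` is the block of rows
of `Q` belonging to `Aᵢ`. Since `H Q = Σᵢ √wᵢ Aᵢ Qᵢ`, we get `Σᵢ Aᵢ Zᵢ = H Q D = K L D = K J`.
Column `j` of `Zᵢ` has squared norm `wᵢ Lⱼⱼ² ‖Qᵢeⱼ‖²`, so `tᵢⱼ = Lⱼⱼ² ‖Qᵢeⱼ‖²` works, and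
`Σᵢ tᵢⱼ = Lⱼⱼ² ‖Qeⱼ‖² ≤ Lⱼⱼ² = Jⱼⱼ`. Finally `J` is lower triangular and `det J = det L · Π Lⱼⱼ = (det L)²`.
-/

namespace Matrix

theorem mul_eq_sum_submatrix_sigma {R : Type*} [NonUnitalNonAssocSemiring R]
    {m p ι : Type*} [Fintype ι] {n : ι → Type*} [∀ i, Fintype (n i)]
    (H : Matrix m (Σ i, n i) R) (Q : Matrix (Σ i, n i) p R) :
    H * Q = ∑ i, H.submatrix id (Sigma.mk i) * Q.submatrix (Sigma.mk i) id := by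
  ext r j
  simp only [mul_apply, sum_apply, submatrix_apply, id, Fintype.sum_sigma]

theorem sum_sq_smul_mul_diagonal_apply {R : Type*} [CommRing R] {ι n : Type*} [Fintype ι]
    [Fintype n] [DecidableEq n] (c : R) (M : Matrix ι n R) (d : n → R) (j : n) :
    ∑ r, ((c • M * diagonal d) r j) ^ 2 = c ^ 2 * d j ^ 2 * ∑ r, M r j ^ 2 := by
  simp only [mul_diagonal, smul_apply, smul_eq_mul, Finset.mul_sum]
  exact Finset.sum_congr rfl fun r _ => by ring

theorem det_mul_diagonal_diag_of_isLowerTriangular {R : Type*} [CommRing R] {n : Type*}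
    [Fintype n] [DecidableEq n] [LinearOrder n] {L : Matrix n n R}
    (hL : L.IsLowerTriangular) :
    (L * diagonal L.diag).det = L.det ^ 2 := by
  rw [det_mul, det_diagonal, sq]
  exact congrArg _ (det_of_isLowerTriangular L hL).symm

end Matrix

/-- Converse change of variables in the proof of Theorem `det_socr`: a feasible pair
`(Q, L)` for the problem with `H = [√w₁A₁, …, √w_sA_s]` yields a feasible point
`(Zᵢ, tᵢⱼ, J)` of the SOCP with `Jⱼⱼ = Lⱼⱼ²` for all `j`, hence `det J = (det L)²`. -/
theorem stmt_10 (s m k : ℕ) (ℓ : Fin s → ℕ)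
    (A : (i : Fin s) → Matrix (Fin m) (Fin (ℓ i)) ℝ)
    (w : Fin s → ℝ) (hw : ∀ i, 0 ≤ w i)
    (K : Matrix (Fin m) (Fin k) ℝ)
    (H : Matrix (Fin m) ((i : Fin s) × Fin (ℓ i)) ℝ)
    (hH : ∀ (r : Fin m) (p : (i : Fin s) × Fin (ℓ i)),
      H r p = Real.sqrt (w p.1) * A p.1 r p.2)
    (Q : Matrix ((i : Fin s) × Fin (ℓ i)) (Fin k) ℝ)
    (L : Matrix (Fin k) (Fin k) ℝ)
    (hLtri : ∀ a b : Fin k, (a : ℕ) < (b : ℕ) → L a b = 0)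
    (hHQ : H * Q = K * L)
    (hQ : ∀ j : Fin k, Real.sqrt (∑ p, Q p j ^ 2) ≤ 1) :
    ∃ (Z : (i : Fin s) → Matrix (Fin (ℓ i)) (Fin k) ℝ)
      (t : Fin s → Fin k → ℝ) (J : Matrix (Fin k) (Fin k) ℝ),
      (∀ i j, 0 ≤ t i j) ∧
      (∀ a b : Fin k, (a : ℕ) < (b : ℕ) → J a b = 0) ∧
      (∑ i, A i * Z i = K * J) ∧
      (∀ (i : Fin s) (j : Fin k), (∑ r, Z i r j ^ 2) ≤ t i j * w i) ∧
      (∀ j : Fin k, ∑ i, t i j ≤ J j j) ∧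
      (∀ j : Fin k, J j j = L j j ^ 2) ∧
      J.det = L.det ^ 2 := by
  set D := diagonal L.diag
  have hLlow : L.IsLowerTriangular := fun a b hab => hLtri a b hab
  have hHblock (i : Fin s) : H.submatrix id (Sigma.mk i) = √(w i) • A i := by
    ext r x
    simp [hH]
  have hJdiag (j : Fin k) : (L * D) j j = L j j ^ 2 := by simp [D, mul_diagonal, sq]
  refine ⟨fun i => √(w i) • Q.submatrix (Sigma.mk i) id * D,
    fun i j => (∑ r, Q ⟨i, r⟩ j ^ 2) * L j j ^ 2, L * D, fun i j => by positivity,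
    fun a b hab => hLlow.mul (blockTriangular_diagonal _) hab, ?_, fun i j => ?_, fun j => ?_,
    hJdiag, det_mul_diagonal_diag_of_isLowerTriangular hLlow⟩
  · calc ∑ i, A i * (√(w i) • Q.submatrix (Sigma.mk i) id * D)
        = (∑ i, H.submatrix id (Sigma.mk i) * Q.submatrix (Sigma.mk i) id) * D := by
          simp only [hHblock, Matrix.sum_mul, Matrix.mul_assoc, Matrix.mul_smul, Matrix.smul_mul]
      _ = K * (L * D) := by rw [← mul_eq_sum_submatrix_sigma, hHQ, Matrix.mul_assoc]
  · rw [sum_sq_smul_mul_diagonal_apply, Real.sq_sqrt (hw i)]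
    exact le_of_eq (by simp only [submatrix_apply, id, diag_apply]; ring)
  · calc ∑ i, (∑ r, Q ⟨i, r⟩ j ^ 2) * L j j ^ 2 = (∑ p, Q p j ^ 2) * L j j ^ 2 := by
          rw [Fintype.sum_sigma, Finset.sum_mul]
      _ ≤ 1 * L j j ^ 2 := by gcongr; exact Real.sqrt_le_one.mp (hQ j)
      _ = (L * D) j j := by rw [one_mul, hJdiag]
end

section
/- Let A₁,…,A_s be real matrices with Aᵢ of size m × ℓᵢ, let w ∈ ℝ₊ˢ, let M(w) = Σᵢ wᵢAᵢAᵢᵀ, let K be an m × k matrix such that every column of K lies in the column space of M(w), and let G satisfy M(w)·G·M(w) = M(w). Then for all matrices Yᵢ ∈ ℝ^{ℓᵢ×k} and all scalars μᵢ ≥ 0 (i = 1,…,s) satisfying Σᵢ AᵢYᵢ = K and ‖Yᵢ‖_F² ≤ wᵢμᵢ for all i, one has trace(KᵀGK) ≤ Σᵢ μᵢ. -/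
/-!
By estimability `K = M H` for some `H`, where `M = M(w)`. As `M` is symmetric and `M G M = M`,
`Kᵀ G K = Hᵀ M G M H = Hᵀ K`, and the trace `T` of this matrix can be read in two ways: with
`Xᵢ = Aᵢᵀ H`, `T = Σ wᵢ ‖Xᵢ‖_F²` (expanding `M`) and `T = Σ ⟪Xᵢ, Yᵢ⟫_F` (expanding `K = Σ Aᵢ Yᵢ`).
Cauchy–Schwarz and AM–GM give `2 ⟪Xᵢ, Yᵢ⟫_F ≤ 2 ‖Xᵢ‖_F √(wᵢ μᵢ) ≤ wᵢ ‖Xᵢ‖_F² + μᵢ`, and summing,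
`2 T ≤ T + Σ μᵢ`.
-/

open Matrix

theorem Matrix.trace_transpose_mul_self_eq_sum_sq {R m n : Type*} [Semiring R] [Fintype m]
    [Fintype n] (X : Matrix m n R) : (Xᵀ * X).trace = ∑ i, ∑ j, X i j ^ 2 := by
  rw [← vec_dotProduct_vec, dotProduct, Fintype.sum_prod_type_right]
  simp only [vec, sq]

theorem Matrix.exists_mul_eq_of_forall_mulVec_eq_s11 {R m n k : Type*} [Semiring R] [Fintype n]
    {M : Matrix m n R} {K : Matrix m k R} (h : ∀ j, ∃ v, M *ᵥ v = fun r => K r j) :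
    ∃ H, M * H = K := by
  choose v hv using h
  refine ⟨of fun r j => v j r, ?_⟩
  ext r j
  exact congrFun (hv j) r

theorem Matrix.transpose_mul_mul_eq_of_mul_eq {R m k : Type*} [CommSemiring R] [Fintype m]
    {M G : Matrix m m R} {H K : Matrix m k R} (hM : M.IsSymm) (hG : M * G * M = M)
    (hK : M * H = K) : Kᵀ * G * K = Hᵀ * K := by
  subst hK
  rw [transpose_mul, hM.eq]
  calc Hᵀ * M * G * (M * H) = Hᵀ * (M * G * M) * H := by simp only [Matrix.mul_assoc]
    _ = Hᵀ * (M * H) := by rw [hG, Matrix.mul_assoc]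

section OrderedRing

variable {R : Type*} [CommRing R] [LinearOrder R] [IsStrictOrderedRing R]

theorem two_mul_le_mul_add_of_sq_le {a t w μ : R} (ha : 0 ≤ a) (hw : 0 ≤ w) (hμ : 0 ≤ μ)
    (h : t ^ 2 ≤ a * (w * μ)) : 2 * t ≤ w * a + μ := by
  refine le_of_sq_le_sq ?_ (by positivity)
  nlinarith [sq_nonneg (w * a - μ)]

variable {m n : Type*} [Fintype m] [Fintype n]

theorem Matrix.trace_transpose_mul_self_nonneg (X : Matrix m n R) : 0 ≤ (Xᵀ * X).trace := by
  rw [trace_transpose_mul_self_eq_sum_sq]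
  positivity

theorem Matrix.sq_trace_transpose_mul_le (X Y : Matrix m n R) :
    (Xᵀ * Y).trace ^ 2 ≤ (Xᵀ * X).trace * (Yᵀ * Y).trace := by
  simp only [← vec_dotProduct_vec, dotProduct, ← sq]
  exact Finset.sum_mul_sq_le_sq_mul_sq _ _ _

theorem Matrix.two_mul_trace_transpose_mul_le (X Y : Matrix m n R) {w μ : R} (hw : 0 ≤ w)
    (hμ : 0 ≤ μ) (hY : (Yᵀ * Y).trace ≤ w * μ) :
    2 * (Xᵀ * Y).trace ≤ w * (Xᵀ * X).trace + μ :=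
  two_mul_le_mul_add_of_sq_le (trace_transpose_mul_self_nonneg X) hw hμ <|
    (sq_trace_transpose_mul_le X Y).trans <|
      mul_le_mul_of_nonneg_left hY (trace_transpose_mul_self_nonneg X)

end OrderedRing

section InformationMatrix

variable {R ι m k : Type*} [Fintype ι] {ℓ : ι → Type*} [∀ i, Fintype (ℓ i)]

def informationMatrix [CommSemiring R] (A : (i : ι) → Matrix m (ℓ i) R) (w : ι → R) :
    Matrix m m R :=
  ∑ i, w i • (A i * (A i)ᵀ)

theorem isSymm_informationMatrix [CommSemiring R] (A : (i : ι) → Matrix m (ℓ i) R)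
    (w : ι → R) : (informationMatrix A w).IsSymm := by
  simp [informationMatrix, IsSymm, transpose_sum, transpose_smul, transpose_mul]

theorem trace_transpose_mul_informationMatrix_mul [CommSemiring R] [Fintype m] [Fintype k]
    (A : (i : ι) → Matrix m (ℓ i) R) (w : ι → R) (H : Matrix m k R) :
    (Hᵀ * informationMatrix A w * H).trace =
      ∑ i, w i * (((A i)ᵀ * H)ᵀ * ((A i)ᵀ * H)).trace := by
  simp only [informationMatrix, Matrix.mul_sum, Matrix.sum_mul, trace_sum, Matrix.mul_smul,
    Matrix.smul_mul, trace_smul, smul_eq_mul, transpose_mul, transpose_transpose,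
    Matrix.mul_assoc]

theorem trace_transpose_mul_mul_le_sum [CommRing R] [LinearOrder R] [IsStrictOrderedRing R]
    [Fintype m] [Fintype k] {A : (i : ι) → Matrix m (ℓ i) R} {w μ : ι → R}
    {G : Matrix m m R} {H K : Matrix m k R} {Y : (i : ι) → Matrix (ℓ i) k R}
    (hw : ∀ i, 0 ≤ w i) (hμ : ∀ i, 0 ≤ μ i)
    (hG : informationMatrix A w * G * informationMatrix A w = informationMatrix A w)
    (hH : informationMatrix A w * H = K) (hAY : ∑ i, A i * Y i = K)
    (hY : ∀ i, ((Y i)ᵀ * Y i).trace ≤ w i * μ i) :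
    (Kᵀ * G * K).trace ≤ ∑ i, μ i := by
  set X := fun i => (A i)ᵀ * H
  rw [transpose_mul_mul_eq_of_mul_eq (isSymm_informationMatrix A w) hG hH]
  have h_gram : (Hᵀ * K).trace = ∑ i, w i * ((X i)ᵀ * X i).trace := by
    rw [← hH, ← Matrix.mul_assoc, trace_transpose_mul_informationMatrix_mul]
  have h_split : (Hᵀ * K).trace = ∑ i, ((X i)ᵀ * Y i).trace := by
    simp only [← hAY, Matrix.mul_sum, trace_sum, X, transpose_mul, transpose_transpose,
      Matrix.mul_assoc]
  have h_double : 2 * (Hᵀ * K).trace ≤ (Hᵀ * K).trace + ∑ i, μ i :=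
    calc 2 * (Hᵀ * K).trace = ∑ i, 2 * ((X i)ᵀ * Y i).trace := by rw [h_split, Finset.mul_sum]
      _ ≤ ∑ i, (w i * ((X i)ᵀ * X i).trace + μ i) := Finset.sum_le_sum fun i _ =>
          two_mul_trace_transpose_mul_le _ _ (hw i) (hμ i) (hY i)
      _ = (Hᵀ * K).trace + ∑ i, μ i := by rw [Finset.sum_add_distrib, h_gram]
  linarith

end InformationMatrix

/-- Weak duality part of the SOCP characterization of `trace(KᵀM(w)⁻K)`
(Proposition on `A_K`-optimality): every feasible point `(Yᵢ, μᵢ)` satisfies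
`trace(KᵀGK) ≤ Σᵢ μᵢ`. -/
theorem stmt_11 (s m k : ℕ) (ℓ : Fin s → ℕ)
    (A : (i : Fin s) → Matrix (Fin m) (Fin (ℓ i)) ℝ)
    (w : Fin s → ℝ) (hw : ∀ i, 0 ≤ w i)
    (K : Matrix (Fin m) (Fin k) ℝ)
    (hest : ∀ j : Fin k, ∃ v : Fin m → ℝ,
      (∑ i, w i • (A i * (A i)ᵀ)) *ᵥ v = fun r => K r j)
    (G : Matrix (Fin m) (Fin m) ℝ)
    (hG : (∑ i, w i • (A i * (A i)ᵀ)) * G * (∑ i, w i • (A i * (A i)ᵀ)) =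
      ∑ i, w i • (A i * (A i)ᵀ))
    (Y : (i : Fin s) → Matrix (Fin (ℓ i)) (Fin k) ℝ)
    (μ : Fin s → ℝ) (hμ : ∀ i, 0 ≤ μ i)
    (hAY : ∑ i, A i * Y i = K)
    (hY : ∀ i : Fin s, (∑ r, ∑ c, Y i r c ^ 2) ≤ w i * μ i) :
    (Kᵀ * G * K).trace ≤ ∑ i, μ i := by
  obtain ⟨H, hH⟩ := exists_mul_eq_of_forall_mulVec_eq_s11 hest
  exact trace_transpose_mul_mul_le_sum (A := A) (H := H) hw hμ hG hH hAY fun i =>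
    (trace_transpose_mul_self_eq_sum_sq (Y i)).trans_le (hY i)
end

section
/- Let A₁,…,A_s be real matrices with Aᵢ of size m × ℓᵢ, let w ∈ ℝ₊ˢ, let M(w) = Σᵢ wᵢAᵢAᵢᵀ, let K be an m × k matrix such that every column of K lies in the column space of M(w), and let G satisfy M(w)·G·M(w) = M(w). Then there exist matrices Yᵢ ∈ ℝ^{ℓᵢ×k} and scalars μᵢ ≥ 0 (i = 1,…,s) with Σᵢ AᵢYᵢ = K, ‖Yᵢ‖_F² ≤ wᵢμᵢ for all i, and Σᵢ μᵢ = trace(KᵀGK); that is, the minimum of Σᵢ μᵢ over this feasible set is attained and equals trace(KᵀM(w)⁻K). -/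
/-!
With `M = Σᵢ wᵢ AᵢAᵢᵀ`, the generalized inverse satisfies `M G K = K` on the estimable `K`,
so `Yᵢ = wᵢ Aᵢᵀ G K` is feasible, and `μᵢ = wᵢ ‖Aᵢᵀ G K‖_F²` makes `‖Yᵢ‖_F² ≤ wᵢ μᵢ` an equality.
Then `Σᵢ μᵢ = trace((GK)ᵀ M (GK))`, and symmetry of `M` turns `(GK)ᵀ M` into `Kᵀ`.
-/

open Matrix

section GeneralizedInverse

variable {m p R : Type*} [Fintype m] [Semiring R]

lemma exists_mul_eq_of_forall_mulVec_eq_col {M : Matrix m m R} {K : Matrix m p R}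
    (hK : ∀ j, ∃ v, M *ᵥ v = fun r => K r j) : ∃ V : Matrix m p R, M * V = K := by
  choose v hv using hK
  exact ⟨of fun r j => v j r, ext fun r j => congrFun (hv j) r⟩

lemma mul_mul_eq_of_mul_mul_self {M G : Matrix m m R} {V K : Matrix m p R}
    (hG : M * G * M = M) (hV : M * V = K) : M * G * K = K := by
  rw [← hV, ← Matrix.mul_assoc, hG]

end GeneralizedInverse

section WeightedGram

variable {ι m p R : Type*} [Fintype ι] [CommSemiring R]
  {n : ι → Type*} [∀ i, Fintype (n i)] (A : (i : ι) → Matrix m (n i) R) (w : ι → R)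

lemma isSymm_sum_smul_mul_transpose : (∑ i, w i • (A i * (A i)ᵀ)).IsSymm := by
  rw [IsSymm, transpose_sum]
  refine Finset.sum_congr rfl fun i _ => ?_
  rw [transpose_smul, transpose_mul, transpose_transpose]

variable [Fintype m]

lemma sum_mul_smul_transpose_mul (X : Matrix m p R) :
    ∑ i, A i * (w i • ((A i)ᵀ * X)) = (∑ i, w i • (A i * (A i)ᵀ)) * X := by
  rw [Matrix.sum_mul]
  refine Finset.sum_congr rfl fun i _ => ?_
  rw [Matrix.mul_smul, Matrix.smul_mul, Matrix.mul_assoc]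

lemma sum_mul_trace_transpose_mul_self [Fintype p] (X : Matrix m p R) :
    ∑ i, w i * (((A i)ᵀ * X)ᵀ * ((A i)ᵀ * X)).trace
      = (Xᵀ * (∑ i, w i • (A i * (A i)ᵀ)) * X).trace := by
  rw [Matrix.mul_sum, Matrix.sum_mul, trace_sum]
  refine Finset.sum_congr rfl fun i _ => ?_
  rw [transpose_mul, transpose_transpose, Matrix.mul_smul, Matrix.smul_mul, trace_smul,
    smul_eq_mul]
  simp only [Matrix.mul_assoc]

end WeightedGram

lemma sum_sq_eq_trace_transpose_mul_self {a b R : Type*} [Fintype a] [Fintype b] [Semiring R]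
    (B : Matrix a b R) : ∑ r, ∑ c, B r c ^ 2 = (Bᵀ * B).trace := by
  simp only [trace, diag, mul_apply, transpose_apply, sq]
  exact Finset.sum_comm

/-- Attainment in the SOCP characterization of `trace(KᵀM(w)⁻K)`: there is a feasible
point `(Yᵢ, μᵢ)` with `Σᵢ μᵢ = trace(KᵀGK)`, so the minimum of `Σᵢ μᵢ` equals
`trace(KᵀM(w)⁻K)`. -/
theorem stmt_12 (s m k : ℕ) (ℓ : Fin s → ℕ)
    (A : (i : Fin s) → Matrix (Fin m) (Fin (ℓ i)) ℝ)
    (w : Fin s → ℝ) (hw : ∀ i, 0 ≤ w i)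
    (K : Matrix (Fin m) (Fin k) ℝ)
    (hest : ∀ j : Fin k, ∃ v : Fin m → ℝ,
      (∑ i, w i • (A i * (A i)ᵀ)) *ᵥ v = fun r => K r j)
    (G : Matrix (Fin m) (Fin m) ℝ)
    (hG : (∑ i, w i • (A i * (A i)ᵀ)) * G * (∑ i, w i • (A i * (A i)ᵀ)) =
      ∑ i, w i • (A i * (A i)ᵀ)) :
    ∃ (Y : (i : Fin s) → Matrix (Fin (ℓ i)) (Fin k) ℝ) (μ : Fin s → ℝ),
      (∀ i, 0 ≤ μ i) ∧
      (∑ i, A i * Y i = K) ∧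
      (∀ i : Fin s, (∑ r, ∑ c, Y i r c ^ 2) ≤ w i * μ i) ∧
      (∑ i, μ i) = (Kᵀ * G * K).trace := by
  set M := ∑ i, w i • (A i * (A i)ᵀ)
  obtain ⟨V, hV⟩ := exists_mul_eq_of_forall_mulVec_eq_col hest
  have hMGK : M * (G * K) = K := by
    rw [← Matrix.mul_assoc]; exact mul_mul_eq_of_mul_mul_self hG hV
  have hGKM : (G * K)ᵀ * M = Kᵀ := by
    have hM : Mᵀ = M := (isSymm_sum_smul_mul_transpose A w).eq
    simpa only [transpose_mul, hM] using congrArg transpose hMGK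
  refine ⟨fun i => w i • ((A i)ᵀ * (G * K)),
    fun i => w i * ∑ r, ∑ c, ((A i)ᵀ * (G * K)) r c ^ 2,
    fun i => mul_nonneg (hw i) (by positivity), ?_, fun i => le_of_eq ?_, ?_⟩
  · rw [sum_mul_smul_transpose_mul, hMGK]
  · simp only [Matrix.smul_apply, smul_eq_mul, Finset.mul_sum]
    exact Finset.sum_congr rfl fun r _ => Finset.sum_congr rfl fun c _ => by ring
  · simp only [sum_sq_eq_trace_transpose_mul_self]
    rw [sum_mul_trace_transpose_mul_self, hGKM, Matrix.mul_assoc]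
end

section
/- Let A₁,…,A_s be real matrices with Aᵢ of size m × ℓᵢ, let w ∈ ℝ₊ˢ, let M(w) = Σᵢ wᵢAᵢAᵢᵀ, and let K be an m × k matrix such that some column of K does NOT lie in the column space of M(w). Then there exist no matrices Yᵢ ∈ ℝ^{ℓᵢ×k} and scalars μᵢ ≥ 0 (i = 1,…,s) satisfying both Σᵢ AᵢYᵢ = K and ‖Yᵢ‖_F² ≤ wᵢμᵢ for all i; i.e., the feasible set of the SOCP for the A_K-criterion is empty in the non-estimable case. -/
/-!
Write `M(w) = B Bᵀ` with the block row `B = [√w₁ A₁ ⋯ √wₛ Aₛ]`, so that `M(w)` and `B` have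
the same column space. A feasible point forces `Yᵢ = 0` whenever `wᵢ = 0`, so each column
`Σᵢ Aᵢ Yᵢ eⱼ` of `K` only involves blocks with `wᵢ > 0`, whose column spaces lie in that of `B`.
-/

open Matrix

theorem Matrix.range_mulVecLin_self_mul_transpose {R m n : Type*} [Field R] [LinearOrder R]
    [IsStrictOrderedRing R] [Fintype m] [Fintype n] (B : Matrix m n R) :
    LinearMap.range (B * Bᵀ).mulVecLin = LinearMap.range B.mulVecLin := by
  refine Submodule.eq_of_le_of_finrank_eq ?_ (rank_self_mul_transpose B)
  rw [mulVecLin_mul]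
  exact LinearMap.range_comp_le_range _ _

theorem Matrix.eq_zero_of_sum_sq_nonpos {m n : Type*} [Fintype m] [Fintype n]
    {Y : Matrix m n ℝ} (hY : ∑ r, ∑ c, Y r c ^ 2 ≤ 0) : Y = 0 := by
  have hrows := le_antisymm hY (by positivity)
  rw [Fintype.sum_eq_zero_iff_of_nonneg fun _ => by positivity] at hrows
  ext r c
  have hrow := congrFun hrows r
  rw [Pi.zero_apply, Fintype.sum_eq_zero_iff_of_nonneg fun _ => sq_nonneg _] at hrow
  exact pow_eq_zero_iff two_ne_zero |>.mp (congrFun hrow c)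

section WeightedBlock

variable {ι m : Type*} {κ : ι → Type*} [Fintype ι] [∀ i, Fintype (κ i)]
  (w : ι → ℝ) (A : ∀ i, Matrix m (κ i) ℝ)

noncomputable def weightedBlockMatrix : Matrix m (Σ i, κ i) ℝ :=
  of fun r p => √(w p.1) * A p.1 r p.2

theorem weightedBlockMatrix_mul_transpose (hw : ∀ i, 0 ≤ w i) :
    weightedBlockMatrix w A * (weightedBlockMatrix w A)ᵀ = ∑ i, w i • (A i * (A i)ᵀ) := by
  ext r r'
  simp only [weightedBlockMatrix, mul_apply, transpose_apply, of_apply, Matrix.sum_apply,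
    Matrix.smul_apply, smul_eq_mul, Fintype.sum_sigma, Finset.mul_sum]
  refine Finset.sum_congr rfl fun i _ => Finset.sum_congr rfl fun c _ => ?_
  linear_combination A i r c * A i r' c * Real.mul_self_sqrt (hw i)

theorem range_mulVecLin_le_range_weightedBlockMatrix {i : ι} (hi : 0 < w i) :
    LinearMap.range (A i).mulVecLin ≤ LinearMap.range (weightedBlockMatrix w A).mulVecLin := by
  classical
  let E : Matrix (Σ i, κ i) (κ i) ℝ := of fun p c => if p = ⟨i, c⟩ then (√(w i))⁻¹ else 0
  have hA : weightedBlockMatrix w A * E = A i := by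
    ext r c
    have : √(w i) ≠ 0 := by positivity
    simp [E, weightedBlockMatrix, mul_apply, mul_right_comm _ (A i r c), this]
  rw [← hA, mulVecLin_mul]
  exact LinearMap.range_comp_le_range _ _

theorem sum_mul_mulVec_mem_range_weightedBlockMatrix {n : Type*} [Fintype n]
    (hw : ∀ i, 0 ≤ w i) (Y : ∀ i, Matrix (κ i) n ℝ) (hY : ∀ i, w i = 0 → Y i = 0) (x : n → ℝ) :
    (∑ i, A i * Y i) *ᵥ x ∈ LinearMap.range (weightedBlockMatrix w A).mulVecLin := by
  rw [sum_mulVec]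
  refine Submodule.sum_mem _ fun i _ => ?_
  rcases (hw i).lt_or_eq with hi | hi
  · exact range_mulVecLin_le_range_weightedBlockMatrix w A hi ⟨Y i *ᵥ x, by simp⟩
  · simp [hY i hi.symm]

end WeightedBlock

/-- Infeasibility of the SOCP for the `A_K`-criterion in the non-estimable case:
if some column of `K` does not lie in the column space of `M(w)`, then there are no
`(Yᵢ, μᵢ)` with `μᵢ ≥ 0`, `Σᵢ AᵢYᵢ = K` and `‖Yᵢ‖_F² ≤ wᵢμᵢ` for all `i`. -/
theorem stmt_13 (s m k : ℕ) (ℓ : Fin s → ℕ)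
    (A : (i : Fin s) → Matrix (Fin m) (Fin (ℓ i)) ℝ)
    (w : Fin s → ℝ) (hw : ∀ i, 0 ≤ w i)
    (K : Matrix (Fin m) (Fin k) ℝ)
    (hnonest : ∃ j : Fin k, ¬ ∃ v : Fin m → ℝ,
      (∑ i, w i • (A i * (A i)ᵀ)) *ᵥ v = fun r => K r j) :
    ¬ ∃ (Y : (i : Fin s) → Matrix (Fin (ℓ i)) (Fin k) ℝ) (μ : Fin s → ℝ),
      (∀ i, 0 ≤ μ i) ∧
      (∑ i, A i * Y i = K) ∧
      (∀ i : Fin s, (∑ r, ∑ c, Y i r c ^ 2) ≤ w i * μ i) := by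
  obtain ⟨j, hj⟩ := hnonest
  rintro ⟨Y, μ, -, rfl, hnorm⟩
  have hY : ∀ i, w i = 0 → Y i = 0 := fun i hi =>
    eq_zero_of_sum_sq_nonpos (by simpa [hi] using hnorm i)
  have hcol := sum_mul_mulVec_mem_range_weightedBlockMatrix w A hw Y hY (Pi.single j 1)
  rw [← range_mulVecLin_self_mul_transpose, weightedBlockMatrix_mul_transpose w A hw] at hcol
  obtain ⟨v, hv⟩ := hcol
  rw [mulVecLin_apply, mulVec_single_one] at hv
  exact hj ⟨v, hv⟩
end
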